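/- arXiv:1603.05167 — 7 statements merged into one kernel-verified Lean document; each statement's English description precedes it below -/
import Mathlib

section
/- Let χ₁ : ℝ → ℝ be any C² function and set χ₂(x) = 2∫₀ˣ χ₁′(s)² ds. Define φ₁, φ₂ : ℝ × ℝ³ → ℝ by φ₁(t,x) = χ₁(x₁ − t) and φ₂(t,x) = −t·χ₂(x₁ − t). Then ∂ₜ²φ₁ − Δₓφ₁ = 0 everywhere, and ∂ₜ²φ₂ − Δₓφ₂ = ((∂ₜ − ∂_{x₁})φ₁)² everywhere. (Equivalently, with the geometric wave operator □ = −∂ₜ² + Δ, the pair solves the model system □φ₁ = 0, □φ₂ = −(L̲φ₁)² with L̲ = ∂ₜ − ∂_{x₁}.) -/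
private lemma compL {u u' : ℝ → ℝ} (h : ∀ x, HasDerivAt u (u' x) x) (c r : ℝ) :
    HasDerivAt (fun y => u (c - y)) (-(u' (c - r))) r := by
  have := (h (c - r)).comp r ((hasDerivAt_id r).const_sub c)
  simpa [Function.comp_def] using this

private lemma compR {u u' : ℝ → ℝ} (h : ∀ x, HasDerivAt u (u' x) x) (c r : ℝ) :
    HasDerivAt (fun y => u (y - c)) (u' (r - c)) r := by
  have := (h (r - c)).comp r ((hasDerivAt_id r).sub_const c)
  simpa [Function.comp_def] using this

/-- For any C² function `χ₁` with `χ₂ x = 2∫₀ˣ χ₁'(s)² ds`, the pair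
`φ₁(t,x) = χ₁(x₁ - t)`, `φ₂(t,x) = -t·χ₂(x₁ - t)` solves the model system:
`∂ₜ²φ₁ - Δₓφ₁ = 0` and `∂ₜ²φ₂ - Δₓφ₂ = ((∂ₜ - ∂_{x₁})φ₁)²` everywhere. -/
theorem model_system_explicit_solution (χ₁ χ₂ : ℝ → ℝ) (hχ₁ : ContDiff ℝ 2 χ₁)
    (hχ₂ : ∀ x : ℝ, χ₂ x = 2 * ∫ s in (0:ℝ)..x, (deriv χ₁ s) ^ 2)
    (φ₁ φ₂ : ℝ → ℝ → ℝ → ℝ → ℝ)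
    (hφ₁ : ∀ t x₁ x₂ x₃ : ℝ, φ₁ t x₁ x₂ x₃ = χ₁ (x₁ - t))
    (hφ₂ : ∀ t x₁ x₂ x₃ : ℝ, φ₂ t x₁ x₂ x₃ = -t * χ₂ (x₁ - t)) :
    ∀ t x₁ x₂ x₃ : ℝ,
      (deriv (deriv (fun r => φ₁ r x₁ x₂ x₃)) t
        - (deriv (deriv (fun r => φ₁ t r x₂ x₃)) x₁
          + deriv (deriv (fun r => φ₁ t x₁ r x₃)) x₂
          + deriv (deriv (fun r => φ₁ t x₁ x₂ r)) x₃) = 0)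
      ∧ (deriv (deriv (fun r => φ₂ r x₁ x₂ x₃)) t
        - (deriv (deriv (fun r => φ₂ t r x₂ x₃)) x₁
          + deriv (deriv (fun r => φ₂ t x₁ r x₃)) x₂
          + deriv (deriv (fun r => φ₂ t x₁ x₂ r)) x₃)
        = (deriv (fun r => φ₁ r x₁ x₂ x₃) t - deriv (fun r => φ₁ t r x₂ x₃) x₁) ^ 2) := by
  -- χ₁ is differentiable, with differentiable derivative
  have h21 : (1 : WithTop ℕ∞) ≤ 2 := one_le_two
  have hd1 : ∀ x, HasDerivAt χ₁ (deriv χ₁ x) x := fun x =>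
    ((hχ₁.differentiable two_ne_zero) x).hasDerivAt
  have hχ₁' : ContDiff ℝ 1 (deriv χ₁) := by
    have : ContDiff ℝ ((1:ℕ) + 1) χ₁ := by exact_mod_cast hχ₁
    exact (contDiff_succ_iff_deriv.mp this).2.2
  have hd2 : ∀ x, HasDerivAt (deriv χ₁) (deriv (deriv χ₁) x) x := fun x =>
    ((hχ₁'.differentiable one_ne_zero) x).hasDerivAt
  have hcont : Continuous fun s => (deriv χ₁ s) ^ 2 :=
    (hχ₁.continuous_deriv h21).pow 2
  -- derivative of χ₂
  have hχ₂eq : χ₂ = fun x => 2 * ∫ s in (0:ℝ)..x, (deriv χ₁ s) ^ 2 := funext hχ₂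
  have hD1 : ∀ x, HasDerivAt χ₂ (2 * (deriv χ₁ x) ^ 2) x := by
    rw [hχ₂eq]
    intro x
    exact (intervalIntegral.integral_hasDerivAt_right
      (hcont.intervalIntegrable _ _)
      (hcont.stronglyMeasurableAtFilter _ _) hcont.continuousAt).const_mul 2
  have hD2 : ∀ x, HasDerivAt (fun x => 2 * (deriv χ₁ x) ^ 2)
      (2 * (2 * deriv χ₁ x ^ 1 * deriv (deriv χ₁) x)) x := fun x =>
    ((hd2 x).pow 2).const_mul 2
  intro t x₁ x₂ x₃
  simp only [hφ₁, hφ₂]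
  -- first derivatives of φ₁
  have e1t : deriv (fun r => χ₁ (x₁ - r)) = fun r => -(deriv χ₁ (x₁ - r)) :=
    funext fun r => (compL hd1 x₁ r).deriv
  have e1x : deriv (fun r => χ₁ (r - t)) = fun r => deriv χ₁ (r - t) :=
    funext fun r => (compR hd1 t r).deriv
  -- second derivatives of φ₁
  have e2t : deriv (deriv (fun r => χ₁ (x₁ - r))) t = deriv (deriv χ₁) (x₁ - t) := by
    rw [e1t]
    simpa using ((compL hd2 x₁ t).neg).deriv
  have e2x : deriv (deriv (fun r => χ₁ (r - t))) x₁ = deriv (deriv χ₁) (x₁ - t) := by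
    rw [e1x]
    exact (compR hd2 t x₁).deriv
  -- φ₂ time derivative
  have f1t : deriv (fun r => -r * χ₂ (x₁ - r))
      = fun r => -χ₂ (x₁ - r) + r * deriv χ₂ (x₁ - r) := by
    funext r
    have hp : HasDerivAt (fun r : ℝ => -r * χ₂ (x₁ - r))
        (-1 * χ₂ (x₁ - r) + -r * -(2 * (deriv χ₁ (x₁ - r)) ^ 2)) r :=
      (hasDerivAt_id r).neg.mul (compL hD1 x₁ r)
    have hdc : deriv χ₂ (x₁ - r) = 2 * (deriv χ₁ (x₁ - r)) ^ 2 := (hD1 _).deriv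
    rw [hp.deriv, hdc]; ring
  have f2t : deriv (deriv (fun r => -r * χ₂ (x₁ - r))) t
      = 2 * deriv χ₂ (x₁ - t) - t * (2 * (2 * deriv χ₁ (x₁ - t) ^ 1 * deriv (deriv χ₁) (x₁ - t))) := by
    rw [f1t]
    have hdc : ∀ y : ℝ, deriv χ₂ y = 2 * (deriv χ₁ y) ^ 2 := fun y => (hD1 y).deriv
    have h1 : HasDerivAt (fun r : ℝ => -χ₂ (x₁ - r) + r * deriv χ₂ (x₁ - r))
        (-(-(deriv χ₂ (x₁ - t))) +
          (1 * deriv χ₂ (x₁ - t) + t * -(2 * (2 * deriv χ₁ (x₁ - t) ^ 1 * deriv (deriv χ₁) (x₁ - t))))) t := by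
      have hA : HasDerivAt (fun r : ℝ => -χ₂ (x₁ - r)) (-(-(deriv χ₂ (x₁ - t)))) t := by
        have : deriv χ₂ = fun y => 2 * (deriv χ₁ y) ^ 2 := funext hdc
        exact (compL (this ▸ hD1) x₁ t).neg
      have hB : HasDerivAt (fun r : ℝ => r * deriv χ₂ (x₁ - r))
          (1 * deriv χ₂ (x₁ - t) + t * -(2 * (2 * deriv χ₁ (x₁ - t) ^ 1 * deriv (deriv χ₁) (x₁ - t)))) t := by
        have hc : HasDerivAt (fun r : ℝ => deriv χ₂ (x₁ - r))
            (-(2 * (2 * deriv χ₁ (x₁ - t) ^ 1 * deriv (deriv χ₁) (x₁ - t)))) t := by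
          have heq : (fun r : ℝ => deriv χ₂ (x₁ - r)) = fun r => 2 * (deriv χ₁ (x₁ - r)) ^ 2 := by
            funext r; rw [hdc]
          rw [heq]
          exact compL hD2 x₁ t
        exact (hasDerivAt_id t).mul hc
      exact hA.add hB
    rw [h1.deriv, hdc (x₁ - t)]; ring
  have f1x : deriv (fun r => -t * χ₂ (r - t)) = fun r => -t * (2 * (deriv χ₁ (r - t)) ^ 2) :=
    funext fun r => ((compR hD1 t r).const_mul (-t)).deriv
  have f2x : deriv (deriv (fun r => -t * χ₂ (r - t))) x₁
      = -t * (2 * (2 * deriv χ₁ (x₁ - t) ^ 1 * deriv (deriv χ₁) (x₁ - t))) := by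
    rw [f1x]
    exact ((compR hD2 t x₁).const_mul (-t)).deriv
  have hdc : deriv χ₂ (x₁ - t) = 2 * (deriv χ₁ (x₁ - t)) ^ 2 := (hD1 _).deriv
  constructor
  · rw [e2t, e2x]
    simp [deriv_const']
  · rw [f2t, f2x, hdc]
    have g1 : deriv (fun r => χ₁ (x₁ - r)) t = -(deriv χ₁ (x₁ - t)) := (compL hd1 x₁ t).deriv
    have g2 : deriv (fun r => χ₁ (r - t)) x₁ = deriv χ₁ (x₁ - t) := (compR hd1 t x₁).deriv
    rw [g1, g2]
    simp [deriv_const']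
    ring
end

section
/- Let χ₁, χ̃₂ : ℝ → ℝ be C¹ functions with 1 + χ₁ > 0 everywhere, and define the metric frame components g_{YZ} and inverse components g^{YZ} as in the context. Then the wave coordinate condition holds: for each γ ∈ {L, L̲, 2, 3}, Σ_{Y,Z ∈ {L,L̲,2,3}} g^{YZ} ∂_Y g_{Zγ} = 0 identically on ℝ^{1+3}. -/
noncomputable section

/-- The null frame `L = ∂ₜ + ∂₁, L̲ = ∂ₜ - ∂₁, ∂₂, ∂₃` as vectors in `ℝ⁴` with
coordinates `(t, x₁, x₂, x₃)`; index `0 = L`, `1 = L̲`, `2 = ∂₂`, `3 = ∂₃`. -/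
def frameVec : Fin 4 → (Fin 4 → ℝ)
  | 0 => ![1, 1, 0, 0]
  | 1 => ![1, -1, 0, 0]
  | 2 => ![0, 0, 1, 0]
  | 3 => ![0, 0, 0, 1]

/-- Frame (directional) derivative `∂_Y f`. -/
def Dfr (Y : Fin 4) (f : (Fin 4 → ℝ) → ℝ) (x : Fin 4 → ℝ) : ℝ :=
  fderiv ℝ f x (frameVec Y)

/-- The frame components `g_{YZ}` of the metric of Definition 3 (Table 1), with
`p = 1 + χ₁(x₁ - t)` and `s = χ̃₂(x₁ - t)`. -/
def gLow (χ₁ χt₂ : ℝ → ℝ) (Y Z : Fin 4) (x : Fin 4 → ℝ) : ℝ :=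
  !![0, -2, 0, 0;
     -2, -(x 0) * χt₂ (x 1 - x 0),
       -(1/4) * x 2 * (1 + χ₁ (x 1 - x 0)) * χt₂ (x 1 - x 0),
       -(1/4) * x 3 * (1 + χ₁ (x 1 - x 0))⁻¹ * χt₂ (x 1 - x 0);
     0, -(1/4) * x 2 * (1 + χ₁ (x 1 - x 0)) * χt₂ (x 1 - x 0),
       1 + χ₁ (x 1 - x 0), 0;
     0, -(1/4) * x 3 * (1 + χ₁ (x 1 - x 0))⁻¹ * χt₂ (x 1 - x 0),
       0, (1 + χ₁ (x 1 - x 0))⁻¹] Y Z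

/-- The inverse frame components `g^{YZ}` (Table 2). -/
def gUp (χ₁ χt₂ : ℝ → ℝ) (Y Z : Fin 4) (x : Fin 4 → ℝ) : ℝ :=
  !![(1/4) * x 0 * χt₂ (x 1 - x 0)
       + ((x 2) ^ 2 * (1 + χ₁ (x 1 - x 0)) + (x 3) ^ 2 * (1 + χ₁ (x 1 - x 0))⁻¹)
           * (χt₂ (x 1 - x 0)) ^ 2 / 64,
     -(1/2), -(1/8) * x 2 * χt₂ (x 1 - x 0), -(1/8) * x 3 * χt₂ (x 1 - x 0);
     -(1/2), 0, 0, 0;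
     -(1/8) * x 2 * χt₂ (x 1 - x 0), 0, (1 + χ₁ (x 1 - x 0))⁻¹, 0;
     -(1/8) * x 3 * χt₂ (x 1 - x 0), 0, 0, 1 + χ₁ (x 1 - x 0)] Y Z

namespace WaveAux
def prj (i : Fin 4) : (Fin 4 → ℝ) →L[ℝ] ℝ := ContinuousLinearMap.proj i
def Lf : (Fin 4 → ℝ) →L[ℝ] ℝ := prj 1 - prj 0
lemma Lf_eval (v : Fin 4 → ℝ) : Lf v = v 1 - v 0 := rfl
lemma prj_eval (i : Fin 4) (v : Fin 4 → ℝ) : prj i v = v i := rfl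
lemma Dfr_of_hasFDerivAt {f : (Fin 4 → ℝ) → ℝ} {D : (Fin 4 → ℝ) →L[ℝ] ℝ} {x : Fin 4 → ℝ}
    (h : HasFDerivAt f D x) (Y : Fin 4) : Dfr Y f x = D (frameVec Y) := by
  rw [Dfr, h.fderiv]
lemma Dfr_const (Y : Fin 4) (c : ℝ) (x : Fin 4 → ℝ) : Dfr Y (fun _ => c) x = 0 := by
  simp [Dfr]
lemma hprj (i : Fin 4) (x : Fin 4 → ℝ) : HasFDerivAt (fun y : Fin 4 → ℝ => y i) (prj i) x :=
  (prj i).hasFDerivAt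
lemma hq (x : Fin 4 → ℝ) : HasFDerivAt (fun y : Fin 4 → ℝ => y 1 - y 0) Lf x :=
  (hprj 1 x).sub (hprj 0 x)
end WaveAux

set_option maxHeartbeats 2000000 in
open WaveAux in
/-- the metric of Definition 3 satisfies the wave coordinate condition
`Σ_{Y,Z} g^{YZ} ∂_Y g_{Zγ} = 0` for each frame index `γ`, identically on `ℝ^{1+3}`. -/
theorem wave_coordinate_condition (χ₁ χt₂ : ℝ → ℝ)
    (h₁ : ContDiff ℝ 1 χ₁) (h₂ : ContDiff ℝ 1 χt₂)
    (hpos : ∀ r : ℝ, 0 < 1 + χ₁ r) :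
    ∀ (γ : Fin 4) (x : Fin 4 → ℝ),
      ∑ Y : Fin 4, ∑ Z : Fin 4, gUp χ₁ χt₂ Y Z x * Dfr Y (gLow χ₁ χt₂ Z γ) x = 0 := by
  intro γ x
  have hPne : (1 + χ₁ (x 1 - x 0)) ≠ 0 := ne_of_gt (hpos _)
  have hχ : HasFDerivAt (fun y : Fin 4 → ℝ => χ₁ (y 1 - y 0))
      (deriv χ₁ (x 1 - x 0) • Lf) x :=
    HasDerivAt.comp_hasFDerivAt x ((h₁.differentiable one_ne_zero (x 1 - x 0)).hasDerivAt) (hq x)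
  have hs : HasFDerivAt (fun y : Fin 4 → ℝ => χt₂ (y 1 - y 0))
      (deriv χt₂ (x 1 - x 0) • Lf) x :=
    HasDerivAt.comp_hasFDerivAt x ((h₂.differentiable one_ne_zero (x 1 - x 0)).hasDerivAt) (hq x)
  have hp : HasFDerivAt (fun y : Fin 4 → ℝ => 1 + χ₁ (y 1 - y 0))
      (deriv χ₁ (x 1 - x 0) • Lf) x := by
    simpa using hχ.const_add 1
  have hpinv : HasFDerivAt (fun y : Fin 4 → ℝ => (1 + χ₁ (y 1 - y 0))⁻¹)
      ((-((1 + χ₁ (x 1 - x 0)) ^ 2)⁻¹) • (deriv χ₁ (x 1 - x 0) • Lf)) x :=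
    HasDerivAt.comp_hasFDerivAt x (hasDerivAt_inv hPne) hp
  have h11 : HasFDerivAt (gLow χ₁ χt₂ 1 1)
      ((-(x 0)) • (deriv χt₂ (x 1 - x 0) • Lf) + χt₂ (x 1 - x 0) • (-(prj 0))) x :=
    ((hprj 0 x).neg).mul hs
  have h12 : HasFDerivAt (gLow χ₁ χt₂ 2 1)
      (((-(1/4) * x 2) * (1 + χ₁ (x 1 - x 0))) • (deriv χt₂ (x 1 - x 0) • Lf)
        + χt₂ (x 1 - x 0) • ((-(1/4) * x 2) • (deriv χ₁ (x 1 - x 0) • Lf)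
            + (1 + χ₁ (x 1 - x 0)) • (((-(1/4) : ℝ)) • prj 2))) x :=
    (((hprj 2 x).const_mul (-(1/4))).mul hp).mul hs
  have h13 : HasFDerivAt (gLow χ₁ χt₂ 3 1)
      (((-(1/4) * x 3) * (1 + χ₁ (x 1 - x 0))⁻¹) • (deriv χt₂ (x 1 - x 0) • Lf)
        + χt₂ (x 1 - x 0) • ((-(1/4) * x 3) •
              ((-((1 + χ₁ (x 1 - x 0)) ^ 2)⁻¹) • (deriv χ₁ (x 1 - x 0) • Lf))
            + (1 + χ₁ (x 1 - x 0))⁻¹ • (((-(1/4) : ℝ)) • prj 3))) x :=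
    (((hprj 3 x).const_mul (-(1/4))).mul hpinv).mul hs
  have E11 : Dfr 0 (gLow χ₁ χt₂ 1 1) x = -(χt₂ (x 1 - x 0)) := by
    rw [Dfr_of_hasFDerivAt h11]; simp [Lf_eval, prj_eval, frameVec]
  have E12_0 : Dfr 0 (gLow χ₁ χt₂ 2 1) x = 0 := by
    rw [Dfr_of_hasFDerivAt h12]; simp [Lf_eval, prj_eval, frameVec]
  have E12_2 : Dfr 2 (gLow χ₁ χt₂ 2 1) x
      = -(1/4) * (1 + χ₁ (x 1 - x 0)) * χt₂ (x 1 - x 0) := by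
    rw [Dfr_of_hasFDerivAt h12]; simp [Lf_eval, prj_eval, frameVec]; ring
  have E13_0 : Dfr 0 (gLow χ₁ χt₂ 3 1) x = 0 := by
    rw [Dfr_of_hasFDerivAt h13]; simp [Lf_eval, prj_eval, frameVec]
  have E13_3 : Dfr 3 (gLow χ₁ χt₂ 3 1) x
      = -(1/4) * (1 + χ₁ (x 1 - x 0))⁻¹ * χt₂ (x 1 - x 0) := by
    rw [Dfr_of_hasFDerivAt h13]; simp [Lf_eval, prj_eval, frameVec]; ring
  have E21_0 : Dfr 0 (gLow χ₁ χt₂ 1 2) x = 0 := by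
    rw [Dfr_of_hasFDerivAt (f := gLow χ₁ χt₂ 1 2) h12]; simp [Lf_eval, prj_eval, frameVec]
  have E31_0 : Dfr 0 (gLow χ₁ χt₂ 1 3) x = 0 := by
    rw [Dfr_of_hasFDerivAt (f := gLow χ₁ χt₂ 1 3) h13]; simp [Lf_eval, prj_eval, frameVec]
  have Ep : ∀ Y ∈ ({0, 2, 3} : Set (Fin 4)), Dfr Y (gLow χ₁ χt₂ 2 2) x = 0 := by
    rintro Y (rfl | rfl | rfl) <;>
      rw [Dfr_of_hasFDerivAt (f := gLow χ₁ χt₂ 2 2) hp] <;>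
      simp [Lf_eval, prj_eval, frameVec]
  have Epinv : ∀ Y ∈ ({0, 2, 3} : Set (Fin 4)), Dfr Y (gLow χ₁ χt₂ 3 3) x = 0 := by
    rintro Y (rfl | rfl | rfl) <;>
      rw [Dfr_of_hasFDerivAt (f := gLow χ₁ χt₂ 3 3) hpinv] <;>
      simp [Lf_eval, prj_eval, frameVec]
  have C01 : ∀ Y, Dfr Y (gLow χ₁ χt₂ 0 1) x = 0 := fun Y => Dfr_const Y (-2) x
  have C00 : ∀ Y, Dfr Y (gLow χ₁ χt₂ 0 0) x = 0 := fun Y => Dfr_const Y 0 x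
  have C10 : ∀ Y, Dfr Y (gLow χ₁ χt₂ 1 0) x = 0 := fun Y => Dfr_const Y (-2) x
  have C20 : ∀ Y, Dfr Y (gLow χ₁ χt₂ 2 0) x = 0 := fun Y => Dfr_const Y 0 x
  have C30 : ∀ Y, Dfr Y (gLow χ₁ χt₂ 3 0) x = 0 := fun Y => Dfr_const Y 0 x
  have C02 : ∀ Y, Dfr Y (gLow χ₁ χt₂ 0 2) x = 0 := fun Y => Dfr_const Y 0 x
  have C32 : ∀ Y, Dfr Y (gLow χ₁ χt₂ 3 2) x = 0 := fun Y => Dfr_const Y 0 x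
  have C03 : ∀ Y, Dfr Y (gLow χ₁ χt₂ 0 3) x = 0 := fun Y => Dfr_const Y 0 x
  have C23 : ∀ Y, Dfr Y (gLow χ₁ χt₂ 2 3) x = 0 := fun Y => Dfr_const Y 0 x
  have main0 : ∑ Y : Fin 4, ∑ Z : Fin 4,
      gUp χ₁ χt₂ Y Z x * Dfr Y (gLow χ₁ χt₂ Z 0) x = 0 := by
    simp only [Fin.sum_univ_four, gUp, Matrix.cons_val_zero, Matrix.cons_val_one,
      Matrix.head_cons, Matrix.cons_val_two, Matrix.cons_val_three, Matrix.tail_cons,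
      Matrix.head_fin_const, Matrix.of_apply, Matrix.cons_val', Matrix.empty_val',
      Matrix.cons_val_fin_one, C00, C10, C20, C30]
    ring
  have main1 : ∑ Y : Fin 4, ∑ Z : Fin 4,
      gUp χ₁ χt₂ Y Z x * Dfr Y (gLow χ₁ χt₂ Z 1) x = 0 := by
    simp only [Fin.sum_univ_four, gUp, Matrix.cons_val_zero, Matrix.cons_val_one,
      Matrix.head_cons, Matrix.cons_val_two, Matrix.cons_val_three, Matrix.tail_cons,
      Matrix.head_fin_const, Matrix.of_apply, Matrix.cons_val', Matrix.empty_val',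
      Matrix.cons_val_fin_one, C01, E11, E12_0, E12_2, E13_0, E13_3]
    field_simp
    ring
  have main2 : ∑ Y : Fin 4, ∑ Z : Fin 4,
      gUp χ₁ χt₂ Y Z x * Dfr Y (gLow χ₁ χt₂ Z 2) x = 0 := by
    simp only [Fin.sum_univ_four, gUp, Matrix.cons_val_zero, Matrix.cons_val_one,
      Matrix.head_cons, Matrix.cons_val_two, Matrix.cons_val_three, Matrix.tail_cons,
      Matrix.head_fin_const, Matrix.of_apply, Matrix.cons_val', Matrix.empty_val',
      Matrix.cons_val_fin_one, C02, C32, E21_0, Ep 0 (by simp), Ep 2 (by simp), Ep 3 (by simp)]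
    ring
  have main3 : ∑ Y : Fin 4, ∑ Z : Fin 4,
      gUp χ₁ χt₂ Y Z x * Dfr Y (gLow χ₁ χt₂ Z 3) x = 0 := by
    simp only [Fin.sum_univ_four, gUp, Matrix.cons_val_zero, Matrix.cons_val_one,
      Matrix.head_cons, Matrix.cons_val_two, Matrix.cons_val_three, Matrix.tail_cons,
      Matrix.head_fin_const, Matrix.of_apply, Matrix.cons_val', Matrix.empty_val',
      Matrix.cons_val_fin_one, C03, C23, E31_0,
      Epinv 0 (by simp), Epinv 2 (by simp), Epinv 3 (by simp)]
    ring
  fin_cases γ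
  · exact main0
  · exact main1
  · exact main2
  · exact main3


end
end

section
/- Let χ₁, χ̃₂ : ℝ → ℝ be C¹ functions with 1 + χ₁ > 0 everywhere, define the metric frame components g_{YZ} as in the context, and define the frame Christoffel symbols Γ_{YZW} = ½(∂_Y g_{ZW} + ∂_W g_{ZY} − ∂_Z g_{YW}) for Y, Z, W ∈ {L, L̲, 2, 3}. Writing χ_{12} = 1 + χ₁, χ_{13} = (1+χ₁)⁻¹, χ_{2A} = χ_{1A}·χ̃₂ (A = 2,3), all evaluated at x₁ − t, the nonzero Christoffel symbols are exactly: Γ_{LL̲L̲} = Γ_{L̲L̲L} = −χ̃₂/2, Γ_{L̲LL̲} = χ̃₂/2, Γ_{L̲L̲L̲} = −χ̃₂/2 + t·χ̃₂′, Γ_{L̲AL̲} = ½x_A χ′_{2A} (A = 2,3), Γ_{L̲BA} = Γ_{ABL̲} = −δ_{AB}χ′_{1A} (A,B = 2,3), Γ_{AL̲B} = δ_{AB}(−¼χ_{2A} + χ′_{1A}) (A,B = 2,3); every component Γ_{YZW} not in this list (and not equal to one of these by the symmetry Γ_{YZW} = Γ_{WZY}) vanishes identically. -/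
noncomputable section

lemma Dfr_const (Y : Fin 4) (x : Fin 4 → ℝ) (c : ℝ) : Dfr Y (fun _ => c) x = 0 := by
  simp [Dfr]

lemma Dfr_F (F : ℝ → ℝ) (hF : Differentiable ℝ F) (Y : Fin 4) (x : Fin 4 → ℝ) :
    Dfr Y (fun y => F (y 1 - y 0)) x
      = (frameVec Y 1 - frameVec Y 0) * deriv F (x 1 - x 0) := by
  have hu : HasFDerivAt (fun y : Fin 4 → ℝ => y 1 - y 0)
      ((ContinuousLinearMap.proj 1 : (Fin 4 → ℝ) →L[ℝ] ℝ) - ContinuousLinearMap.proj 0) x :=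
    ((ContinuousLinearMap.proj 1 : (Fin 4 → ℝ) →L[ℝ] ℝ).hasFDerivAt (x := x)).sub
      ((ContinuousLinearMap.proj 0 : (Fin 4 → ℝ) →L[ℝ] ℝ).hasFDerivAt (x := x))
  have hFu : HasFDerivAt (fun y : Fin 4 → ℝ => F (y 1 - y 0))
      (deriv F (x 1 - x 0) • ((ContinuousLinearMap.proj 1 : (Fin 4 → ℝ) →L[ℝ] ℝ)
        - ContinuousLinearMap.proj 0)) x :=
    (hF (x 1 - x 0)).hasDerivAt.comp_hasFDerivAt x hu
  rw [Dfr, hFu.fderiv]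
  simp [mul_comm]

lemma Dfr_cxF (c : ℝ) (i : Fin 4) (F : ℝ → ℝ) (hF : Differentiable ℝ F) (Y : Fin 4)
    (x : Fin 4 → ℝ) :
    Dfr Y (fun y => c * y i * F (y 1 - y 0)) x
      = c * frameVec Y i * F (x 1 - x 0)
        + c * x i * (frameVec Y 1 - frameVec Y 0) * deriv F (x 1 - x 0) := by
  have hu : HasFDerivAt (fun y : Fin 4 → ℝ => y 1 - y 0)
      ((ContinuousLinearMap.proj 1 : (Fin 4 → ℝ) →L[ℝ] ℝ) - ContinuousLinearMap.proj 0) x :=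
    ((ContinuousLinearMap.proj 1 : (Fin 4 → ℝ) →L[ℝ] ℝ).hasFDerivAt (x := x)).sub
      ((ContinuousLinearMap.proj 0 : (Fin 4 → ℝ) →L[ℝ] ℝ).hasFDerivAt (x := x))
  have hFu : HasFDerivAt (fun y : Fin 4 → ℝ => F (y 1 - y 0))
      (deriv F (x 1 - x 0) • ((ContinuousLinearMap.proj 1 : (Fin 4 → ℝ) →L[ℝ] ℝ)
        - ContinuousLinearMap.proj 0)) x :=
    (hF (x 1 - x 0)).hasDerivAt.comp_hasFDerivAt x hu
  have hc : HasFDerivAt (fun y : Fin 4 → ℝ => c * y i)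
      (c • (ContinuousLinearMap.proj i : (Fin 4 → ℝ) →L[ℝ] ℝ)) x :=
    ((ContinuousLinearMap.proj i : (Fin 4 → ℝ) →L[ℝ] ℝ).hasFDerivAt).const_mul c
  have h : HasFDerivAt (fun y : Fin 4 → ℝ => c * y i * F (y 1 - y 0)) _ x := hc.mul hFu
  rw [Dfr, h.fderiv]
  simp
  ring

/-- The frame Christoffel symbols `Γ_{YZW} = ½(∂_Y g_{ZW} + ∂_W g_{ZY} - ∂_Z g_{YW})`. -/
def Gam (χ₁ χt₂ : ℝ → ℝ) (Y Z W : Fin 4) (x : Fin 4 → ℝ) : ℝ :=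
  (Dfr Y (gLow χ₁ χt₂ Z W) x + Dfr W (gLow χ₁ χt₂ Z Y) x - Dfr Z (gLow χ₁ χt₂ Y W) x) / 2

set_option maxHeartbeats 1600000 in
/-- the nonzero frame Christoffel symbols of the metric of Definition 3 are
exactly `Γ_{LL̲L̲} = Γ_{L̲L̲L} = -χ̃₂/2`, `Γ_{L̲LL̲} = χ̃₂/2`, `Γ_{L̲L̲L̲} = -χ̃₂/2 + t·χ̃₂′`,
`Γ_{L̲AL̲} = ½x_A χ′_{2A}`, `Γ_{L̲BA} = Γ_{ABL̲} = -δ_{AB}χ′_{1A}`,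
`Γ_{AL̲B} = δ_{AB}(-¼χ_{2A} + χ′_{1A})`; all other components vanish identically. -/
theorem christoffel_symbols (χ₁ χt₂ : ℝ → ℝ)
    (h₁ : ContDiff ℝ 1 χ₁) (h₂ : ContDiff ℝ 1 χt₂)
    (hpos : ∀ r : ℝ, 0 < 1 + χ₁ r) :
    ∀ x : Fin 4 → ℝ,
      Gam χ₁ χt₂ 0 1 1 x = -χt₂ (x 1 - x 0) / 2 ∧
      Gam χ₁ χt₂ 1 1 0 x = -χt₂ (x 1 - x 0) / 2 ∧
      Gam χ₁ χt₂ 1 0 1 x = χt₂ (x 1 - x 0) / 2 ∧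
      Gam χ₁ χt₂ 1 1 1 x = -χt₂ (x 1 - x 0) / 2 + x 0 * deriv χt₂ (x 1 - x 0) ∧
      Gam χ₁ χt₂ 1 2 1 x
        = (1/2) * x 2 * deriv (fun r => (1 + χ₁ r) * χt₂ r) (x 1 - x 0) ∧
      Gam χ₁ χt₂ 1 3 1 x
        = (1/2) * x 3 * deriv (fun r => (1 + χ₁ r)⁻¹ * χt₂ r) (x 1 - x 0) ∧
      Gam χ₁ χt₂ 1 2 2 x = -deriv (fun r => 1 + χ₁ r) (x 1 - x 0) ∧
      Gam χ₁ χt₂ 2 2 1 x = -deriv (fun r => 1 + χ₁ r) (x 1 - x 0) ∧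
      Gam χ₁ χt₂ 1 3 3 x = -deriv (fun r => (1 + χ₁ r)⁻¹) (x 1 - x 0) ∧
      Gam χ₁ χt₂ 3 3 1 x = -deriv (fun r => (1 + χ₁ r)⁻¹) (x 1 - x 0) ∧
      Gam χ₁ χt₂ 2 1 2 x
        = -(1/4) * ((1 + χ₁ (x 1 - x 0)) * χt₂ (x 1 - x 0))
            + deriv (fun r => 1 + χ₁ r) (x 1 - x 0) ∧
      Gam χ₁ χt₂ 3 1 3 x
        = -(1/4) * ((1 + χ₁ (x 1 - x 0))⁻¹ * χt₂ (x 1 - x 0))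
            + deriv (fun r => (1 + χ₁ r)⁻¹) (x 1 - x 0) ∧
      (∀ Y Z W : Fin 4,
        (Y, Z, W) ∉ ({(0,1,1), (1,1,0), (1,0,1), (1,1,1), (1,2,1), (1,3,1),
            (1,2,2), (2,2,1), (1,3,3), (3,3,1), (2,1,2), (3,1,3)} :
              Set (Fin 4 × Fin 4 × Fin 4)) →
        Gam χ₁ χt₂ Y Z W x = 0) := by
  have hχ₁ : Differentiable ℝ χ₁ := h₁.differentiable one_ne_zero
  have hχ₂ : Differentiable ℝ χt₂ := h₂.differentiable one_ne_zero
  have hPd : Differentiable ℝ (fun r => 1 + χ₁ r) := (differentiable_const _).add hχ₁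
  have hPid : Differentiable ℝ (fun r => (1 + χ₁ r)⁻¹) := hPd.inv (fun r => (hpos r).ne')
  have hQd : Differentiable ℝ (fun r => (1 + χ₁ r) * χt₂ r) := hPd.mul hχ₂
  have hQtd : Differentiable ℝ (fun r => (1 + χ₁ r)⁻¹ * χt₂ r) := hPid.mul hχ₂
  intro x
  have dz : ∀ (Z W : Fin 4) (c : ℝ), gLow χ₁ χt₂ Z W = (fun _ => c) →
      ∀ Y, Dfr Y (gLow χ₁ χt₂ Z W) x = 0 := by
    intro Z W c h Y; rw [h]; exact Dfr_const Y x c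
  have d00 := dz 0 0 0 (by funext y; simp [gLow, Matrix.vecHead, Matrix.vecTail])
  have d01 := dz 0 1 (-2) (by funext y; simp [gLow, Matrix.vecHead, Matrix.vecTail])
  have d02 := dz 0 2 0 (by funext y; simp [gLow, Matrix.vecHead, Matrix.vecTail])
  have d03 := dz 0 3 0 (by funext y; simp [gLow, Matrix.vecHead, Matrix.vecTail])
  have d10 := dz 1 0 (-2) (by funext y; simp [gLow, Matrix.vecHead, Matrix.vecTail])
  have d20 := dz 2 0 0 (by funext y; simp [gLow, Matrix.vecHead, Matrix.vecTail])
  have d30 := dz 3 0 0 (by funext y; simp [gLow, Matrix.vecHead, Matrix.vecTail])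
  have d23 := dz 2 3 0 (by funext y; simp [gLow, Matrix.vecHead, Matrix.vecTail])
  have d32 := dz 3 2 0 (by funext y; simp [gLow, Matrix.vecHead, Matrix.vecTail])
  have d11 : ∀ Y, Dfr Y (gLow χ₁ χt₂ 1 1) x
      = (-1) * frameVec Y 0 * χt₂ (x 1 - x 0)
        + (-1) * x 0 * (frameVec Y 1 - frameVec Y 0) * deriv χt₂ (x 1 - x 0) := by
    intro Y
    rw [show gLow χ₁ χt₂ 1 1 = fun y => (-1 : ℝ) * y 0 * χt₂ (y 1 - y 0) from by
      funext y; simp [gLow]; try ring]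
    exact Dfr_cxF (-1) 0 χt₂ hχ₂ Y x
  have d12 : ∀ Y, Dfr Y (gLow χ₁ χt₂ 1 2) x
      = (-(1/4)) * frameVec Y 2 * ((1 + χ₁ (x 1 - x 0)) * χt₂ (x 1 - x 0))
        + (-(1/4)) * x 2 * (frameVec Y 1 - frameVec Y 0)
            * deriv (fun r => (1 + χ₁ r) * χt₂ r) (x 1 - x 0) := by
    intro Y
    rw [show gLow χ₁ χt₂ 1 2
        = fun y => (-(1/4) : ℝ) * y 2 * ((1 + χ₁ (y 1 - y 0)) * χt₂ (y 1 - y 0)) from by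
      funext y; simp [gLow]; try ring]
    exact Dfr_cxF (-(1/4)) 2 (fun r => (1 + χ₁ r) * χt₂ r) hQd Y x
  have d21 : ∀ Y, Dfr Y (gLow χ₁ χt₂ 2 1) x
      = (-(1/4)) * frameVec Y 2 * ((1 + χ₁ (x 1 - x 0)) * χt₂ (x 1 - x 0))
        + (-(1/4)) * x 2 * (frameVec Y 1 - frameVec Y 0)
            * deriv (fun r => (1 + χ₁ r) * χt₂ r) (x 1 - x 0) := by
    intro Y
    rw [show gLow χ₁ χt₂ 2 1
        = fun y => (-(1/4) : ℝ) * y 2 * ((1 + χ₁ (y 1 - y 0)) * χt₂ (y 1 - y 0)) from by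
      funext y; simp [gLow]; try ring]
    exact Dfr_cxF (-(1/4)) 2 (fun r => (1 + χ₁ r) * χt₂ r) hQd Y x
  have d13 : ∀ Y, Dfr Y (gLow χ₁ χt₂ 1 3) x
      = (-(1/4)) * frameVec Y 3 * ((1 + χ₁ (x 1 - x 0))⁻¹ * χt₂ (x 1 - x 0))
        + (-(1/4)) * x 3 * (frameVec Y 1 - frameVec Y 0)
            * deriv (fun r => (1 + χ₁ r)⁻¹ * χt₂ r) (x 1 - x 0) := by
    intro Y
    rw [show gLow χ₁ χt₂ 1 3
        = fun y => (-(1/4) : ℝ) * y 3 * ((1 + χ₁ (y 1 - y 0))⁻¹ * χt₂ (y 1 - y 0)) from by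
      funext y; simp [gLow]; try ring]
    exact Dfr_cxF (-(1/4)) 3 (fun r => (1 + χ₁ r)⁻¹ * χt₂ r) hQtd Y x
  have d31 : ∀ Y, Dfr Y (gLow χ₁ χt₂ 3 1) x
      = (-(1/4)) * frameVec Y 3 * ((1 + χ₁ (x 1 - x 0))⁻¹ * χt₂ (x 1 - x 0))
        + (-(1/4)) * x 3 * (frameVec Y 1 - frameVec Y 0)
            * deriv (fun r => (1 + χ₁ r)⁻¹ * χt₂ r) (x 1 - x 0) := by
    intro Y
    rw [show gLow χ₁ χt₂ 3 1
        = fun y => (-(1/4) : ℝ) * y 3 * ((1 + χ₁ (y 1 - y 0))⁻¹ * χt₂ (y 1 - y 0)) from by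
      funext y; simp [gLow]; try ring]
    exact Dfr_cxF (-(1/4)) 3 (fun r => (1 + χ₁ r)⁻¹ * χt₂ r) hQtd Y x
  have d22 : ∀ Y, Dfr Y (gLow χ₁ χt₂ 2 2) x
      = (frameVec Y 1 - frameVec Y 0) * deriv (fun r => 1 + χ₁ r) (x 1 - x 0) := by
    intro Y
    rw [show gLow χ₁ χt₂ 2 2 = fun y => (fun r => 1 + χ₁ r) (y 1 - y 0) from by
      funext y; simp [gLow]]
    exact Dfr_F (fun r => 1 + χ₁ r) hPd Y x
  have d33 : ∀ Y, Dfr Y (gLow χ₁ χt₂ 3 3) x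
      = (frameVec Y 1 - frameVec Y 0) * deriv (fun r => (1 + χ₁ r)⁻¹) (x 1 - x 0) := by
    intro Y
    rw [show gLow χ₁ χt₂ 3 3 = fun y => (fun r => (1 + χ₁ r)⁻¹) (y 1 - y 0) from by
      funext y; simp [gLow]]
    exact Dfr_F (fun r => (1 + χ₁ r)⁻¹) hPid Y x
  refine ⟨?_, ?_, ?_, ?_, ?_, ?_, ?_, ?_, ?_, ?_, ?_, ?_, ?_⟩
  case _ =>
    simp only [Gam, d00, d01, d02, d03, d10, d20, d30, d23, d32, d11, d12, d21, d13, d31,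
      d22, d33]
    simp [frameVec]
    try ring
  case _ =>
    simp only [Gam, d00, d01, d02, d03, d10, d20, d30, d23, d32, d11, d12, d21, d13, d31,
      d22, d33]
    simp [frameVec]
    try ring
  case _ =>
    simp only [Gam, d00, d01, d02, d03, d10, d20, d30, d23, d32, d11, d12, d21, d13, d31,
      d22, d33]
    simp [frameVec]
    try ring
  case _ =>
    simp only [Gam, d00, d01, d02, d03, d10, d20, d30, d23, d32, d11, d12, d21, d13, d31,
      d22, d33]
    simp [frameVec]
    try ring
  case _ =>
    simp only [Gam, d00, d01, d02, d03, d10, d20, d30, d23, d32, d11, d12, d21, d13, d31,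
      d22, d33]
    simp [frameVec]
    try ring
  case _ =>
    simp only [Gam, d00, d01, d02, d03, d10, d20, d30, d23, d32, d11, d12, d21, d13, d31,
      d22, d33]
    simp [frameVec]
    try ring
  case _ =>
    simp only [Gam, d00, d01, d02, d03, d10, d20, d30, d23, d32, d11, d12, d21, d13, d31,
      d22, d33]
    simp [frameVec]
    try ring
  case _ =>
    simp only [Gam, d00, d01, d02, d03, d10, d20, d30, d23, d32, d11, d12, d21, d13, d31,
      d22, d33]
    simp [frameVec]
    try ring
  case _ =>
    simp only [Gam, d00, d01, d02, d03, d10, d20, d30, d23, d32, d11, d12, d21, d13, d31,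
      d22, d33]
    simp [frameVec]
    try ring
  case _ =>
    simp only [Gam, d00, d01, d02, d03, d10, d20, d30, d23, d32, d11, d12, d21, d13, d31,
      d22, d33]
    simp [frameVec]
    try ring
  case _ =>
    simp only [Gam, d00, d01, d02, d03, d10, d20, d30, d23, d32, d11, d12, d21, d13, d31,
      d22, d33]
    simp [frameVec]
    try ring
  case _ =>
    simp only [Gam, d00, d01, d02, d03, d10, d20, d30, d23, d32, d11, d12, d21, d13, d31,
      d22, d33]
    simp [frameVec]
    try ring
  case _ =>
    intro Y Z W h
    simp only [Set.mem_insert_iff, Set.mem_singleton_iff, not_or] at h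
    obtain ⟨h1,h2,h3,h4,h5,h6,h7,h8,h9,h10,h11,h12⟩ := h
    have hcases : ∀ v : Fin 4, v = 0 ∨ v = 1 ∨ v = 2 ∨ v = 3 := by decide
    rcases hcases Y with rfl | rfl | rfl | rfl <;>
      rcases hcases Z with rfl | rfl | rfl | rfl <;>
        rcases hcases W with rfl | rfl | rfl | rfl <;>
      first
        | exact absurd rfl h1 | exact absurd rfl h2 | exact absurd rfl h3
        | exact absurd rfl h4 | exact absurd rfl h5 | exact absurd rfl h6
        | exact absurd rfl h7 | exact absurd rfl h8 | exact absurd rfl h9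
        | exact absurd rfl h10 | exact absurd rfl h11 | exact absurd rfl h12
        | (simp only [Gam, d00, d01, d02, d03, d10, d20, d30, d23, d32, d11, d12, d21,
             d13, d31, d22, d33]
           simp [frameVec]
           try ring)

end
end

section
/- Let χ₁, χ̃₂ : ℝ → ℝ be C² functions with 1 + χ₁ > 0 everywhere, define the metric frame components g_{YZ}, inverse components g^{YZ}, Christoffel symbols Γ_{YZW} = ½(∂_Y g_{ZW} + ∂_W g_{ZY} − ∂_Z g_{YW}), and frame curvature components R_{YZWV} = ∂_V Γ_{YZW} − ∂_W Γ_{YZV} + Σ_{P,Q} g^{PQ}(Γ_{WPZ}Γ_{YQV} − Γ_{ZPV}Γ_{YQW}) as in the context. Then for A, B ∈ {2,3}: R_{AL̲BL̲} = δ_{AB}·[½χ′_{2A} − 2χ″_{1A} + χ_{1A}⁻¹(χ′_{1A})² + ¼χ̃₂(−¼χ_{2A} + χ′_{1A})], where χ_{12} = 1 + χ₁, χ_{13} = (1+χ₁)⁻¹, χ_{2A} = χ_{1A}·χ̃₂, all evaluated at x₁ − t. -/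
noncomputable section

/-- The frame curvature components
`R_{YZWV} = ∂_V Γ_{YZW} - ∂_W Γ_{YZV} + Σ_{P,Q} g^{PQ}(Γ_{WPZ}Γ_{YQV} - Γ_{ZPV}Γ_{YQW})`. -/
def Riem (χ₁ χt₂ : ℝ → ℝ) (Y Z W V : Fin 4) (x : Fin 4 → ℝ) : ℝ :=
  Dfr V (Gam χ₁ χt₂ Y Z W) x - Dfr W (Gam χ₁ χt₂ Y Z V) x
    + ∑ P : Fin 4, ∑ Q : Fin 4, gUp χ₁ χt₂ P Q x *
        (Gam χ₁ χt₂ W P Z x * Gam χ₁ χt₂ Y Q V x - Gam χ₁ χt₂ Z P V x * Gam χ₁ χt₂ Y Q W x)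

/-- `χ_{1A}` as a function of `r = x₁ - t`: `χ_{12} = 1 + χ₁`, `χ_{13} = (1 + χ₁)⁻¹`. -/
def cOne (χ₁ : ℝ → ℝ) (A : Fin 4) : ℝ → ℝ :=
  if A = 2 then fun r => 1 + χ₁ r
  else if A = 3 then fun r => (1 + χ₁ r)⁻¹
  else 0


namespace CurvAux
open scoped BigOperators

noncomputable def U4 : (Fin 4 → ℝ) →L[ℝ] ℝ :=
  (ContinuousLinearMap.proj 1 : (Fin 4 → ℝ) →L[ℝ] ℝ) - ContinuousLinearMap.proj 0

lemma hasFDerivAt_u (x : Fin 4 → ℝ) :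
    HasFDerivAt (fun y : Fin 4 → ℝ => y 1 - y 0) U4 x := U4.hasFDerivAt

lemma dfr_base (f : ℝ → ℝ) (Y : Fin 4) (x : Fin 4 → ℝ)
    (hf : DifferentiableAt ℝ f (x 1 - x 0)) :
    Dfr Y (fun y => f (y 1 - y 0)) x
      = (frameVec Y 1 - frameVec Y 0) * deriv f (x 1 - x 0) := by
  have h : HasFDerivAt (fun y : Fin 4 → ℝ => f (y 1 - y 0))
      (deriv f (x 1 - x 0) • U4) x :=
    (hf.hasDerivAt).comp_hasFDerivAt x (hasFDerivAt_u x)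
  rw [Dfr, h.fderiv]
  simp [U4, mul_comm]

lemma dfr_coord_mul (i : Fin 4) (f : ℝ → ℝ) (Y : Fin 4) (x : Fin 4 → ℝ)
    (hf : DifferentiableAt ℝ f (x 1 - x 0)) :
    Dfr Y (fun y => y i * f (y 1 - y 0)) x
      = frameVec Y i * f (x 1 - x 0)
        + x i * ((frameVec Y 1 - frameVec Y 0) * deriv f (x 1 - x 0)) := by
  have h1 : HasFDerivAt (fun y : Fin 4 → ℝ => y i)
      (ContinuousLinearMap.proj i : (Fin 4 → ℝ) →L[ℝ] ℝ) x :=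
    (ContinuousLinearMap.proj i : (Fin 4 → ℝ) →L[ℝ] ℝ).hasFDerivAt
  have h2 : HasFDerivAt (fun y : Fin 4 → ℝ => f (y 1 - y 0))
      (deriv f (x 1 - x 0) • U4) x :=
    (hf.hasDerivAt).comp_hasFDerivAt x (hasFDerivAt_u x)
  have h : HasFDerivAt (fun y : Fin 4 → ℝ => y i * f (y 1 - y 0)) _ x := h1.mul h2
  rw [Dfr, h.fderiv]
  simp [U4]
  ring

lemma dfr_const (c : ℝ) (Y : Fin 4) (x : Fin 4 → ℝ) :
    Dfr Y (fun _ => c) x = 0 := by simp [Dfr]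

variable (χ₁ χt₂ : ℝ → ℝ)

/- one-variable derivative facts -/
lemma hdiff1 (h₁ : ContDiff ℝ 2 χ₁) : Differentiable ℝ χ₁ :=
  h₁.differentiable (by norm_num)
lemma hdiff1' (h₁ : ContDiff ℝ 2 χ₁) : Differentiable ℝ (deriv χ₁) := by
  have h : ContDiff ℝ ((1:ℕ∞)+1) χ₁ := by convert h₁ using 2; simp [one_add_one_eq_two]
  exact (contDiff_succ_iff_deriv.mp h).2.2.differentiable (by simp)

lemma pne (hpos : ∀ r : ℝ, 0 < 1 + χ₁ r) (r : ℝ) : (1 + χ₁ r) ≠ 0 :=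
  ne_of_gt (hpos r)

lemma hder_s (h₂ : ContDiff ℝ 2 χt₂) (r : ℝ) :
    HasDerivAt χt₂ (deriv χt₂ r) r :=
  ((h₂.differentiable (by norm_num)) r).hasDerivAt

lemma hder_p (h₁ : ContDiff ℝ 2 χ₁) (r : ℝ) :
    HasDerivAt (fun r => 1 + χ₁ r) (deriv χ₁ r) r :=
  ((hdiff1 χ₁ h₁ r).hasDerivAt).const_add 1

lemma hder_q (h₁ : ContDiff ℝ 2 χ₁) (hpos : ∀ r : ℝ, 0 < 1 + χ₁ r) (r : ℝ) :
    HasDerivAt (fun r => (1 + χ₁ r)⁻¹) (-(deriv χ₁ r) / (1 + χ₁ r)^2) r :=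
  (hder_p χ₁ h₁ r).inv (pne χ₁ hpos r)

lemma hder_d1 (h₁ : ContDiff ℝ 2 χ₁) (r : ℝ) :
    HasDerivAt (deriv χ₁) (deriv (deriv χ₁) r) r :=
  (hdiff1' χ₁ h₁ r).hasDerivAt

lemma hder_ps (h₁ : ContDiff ℝ 2 χ₁) (h₂ : ContDiff ℝ 2 χt₂) (r : ℝ) :
    HasDerivAt (fun r => (1 + χ₁ r) * χt₂ r)
      (deriv χ₁ r * χt₂ r + (1 + χ₁ r) * deriv χt₂ r) r :=
  (hder_p χ₁ h₁ r).mul (hder_s χt₂ h₂ r)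

lemma hder_qs (h₁ : ContDiff ℝ 2 χ₁) (h₂ : ContDiff ℝ 2 χt₂)
    (hpos : ∀ r : ℝ, 0 < 1 + χ₁ r) (r : ℝ) :
    HasDerivAt (fun r => (1 + χ₁ r)⁻¹ * χt₂ r)
      (-(deriv χ₁ r) / (1 + χ₁ r)^2 * χt₂ r + (1 + χ₁ r)⁻¹ * deriv χt₂ r) r :=
  (hder_q χ₁ h₁ hpos r).mul (hder_s χt₂ h₂ r)

/- closed forms for the metric entries -/
lemma glow00 : gLow χ₁ χt₂ 0 0 = fun _ => (0:ℝ) := by funext x; simp [gLow, Matrix.vecHead, Matrix.vecTail]; try ring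
lemma glow01 : gLow χ₁ χt₂ 0 1 = fun _ => (-2:ℝ) := by funext x; simp [gLow, Matrix.vecHead, Matrix.vecTail]; try ring
lemma glow02 : gLow χ₁ χt₂ 0 2 = fun _ => (0:ℝ) := by funext x; simp [gLow, Matrix.vecHead, Matrix.vecTail]; try ring
lemma glow03 : gLow χ₁ χt₂ 0 3 = fun _ => (0:ℝ) := by funext x; simp [gLow, Matrix.vecHead, Matrix.vecTail]; try ring
lemma glow10 : gLow χ₁ χt₂ 1 0 = fun _ => (-2:ℝ) := by funext x; simp [gLow, Matrix.vecHead, Matrix.vecTail]; try ring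
lemma glow20 : gLow χ₁ χt₂ 2 0 = fun _ => (0:ℝ) := by funext x; simp [gLow, Matrix.vecHead, Matrix.vecTail]; try ring
lemma glow30 : gLow χ₁ χt₂ 3 0 = fun _ => (0:ℝ) := by funext x; simp [gLow, Matrix.vecHead, Matrix.vecTail]; try ring
lemma glow23 : gLow χ₁ χt₂ 2 3 = fun _ => (0:ℝ) := by funext x; simp [gLow, Matrix.vecHead, Matrix.vecTail]; try ring
lemma glow32 : gLow χ₁ χt₂ 3 2 = fun _ => (0:ℝ) := by funext x; simp [gLow, Matrix.vecHead, Matrix.vecTail]; try ring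
lemma glow11 : gLow χ₁ χt₂ 1 1
    = fun x => x 0 * ((fun r => -(χt₂ r)) (x 1 - x 0)) := by
  funext x; simp [gLow, Matrix.vecHead, Matrix.vecTail]; try ring
lemma glow12 : gLow χ₁ χt₂ 1 2
    = fun x => x 2 * ((fun r => -(1/4) * ((1 + χ₁ r) * χt₂ r)) (x 1 - x 0)) := by
  funext x; simp [gLow, Matrix.vecHead, Matrix.vecTail]; try ring
lemma glow21 : gLow χ₁ χt₂ 2 1
    = fun x => x 2 * ((fun r => -(1/4) * ((1 + χ₁ r) * χt₂ r)) (x 1 - x 0)) := by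
  funext x; simp [gLow, Matrix.vecHead, Matrix.vecTail]; try ring
lemma glow13 : gLow χ₁ χt₂ 1 3
    = fun x => x 3 * ((fun r => -(1/4) * ((1 + χ₁ r)⁻¹ * χt₂ r)) (x 1 - x 0)) := by
  funext x; simp [gLow, Matrix.vecHead, Matrix.vecTail]; try ring
lemma glow31 : gLow χ₁ χt₂ 3 1
    = fun x => x 3 * ((fun r => -(1/4) * ((1 + χ₁ r)⁻¹ * χt₂ r)) (x 1 - x 0)) := by
  funext x; simp [gLow, Matrix.vecHead, Matrix.vecTail]; try ring
lemma glow22 : gLow χ₁ χt₂ 2 2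
    = fun x => (fun r => 1 + χ₁ r) (x 1 - x 0) := by funext x; simp [gLow, Matrix.vecHead, Matrix.vecTail]; try ring
lemma glow33 : gLow χ₁ χt₂ 3 3
    = fun x => (fun r => (1 + χ₁ r)⁻¹) (x 1 - x 0) := by funext x; simp [gLow, Matrix.vecHead, Matrix.vecTail]; try ring

/- frame derivatives of the metric entries -/
section DG

lemma dg00 (Y : Fin 4) (x : Fin 4 → ℝ) : Dfr Y (gLow χ₁ χt₂ 0 0) x = 0 := by
  rw [glow00]; exact dfr_const _ _ _
lemma dg01 (Y : Fin 4) (x : Fin 4 → ℝ) : Dfr Y (gLow χ₁ χt₂ 0 1) x = 0 := by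
  rw [glow01]; exact dfr_const _ _ _
lemma dg02 (Y : Fin 4) (x : Fin 4 → ℝ) : Dfr Y (gLow χ₁ χt₂ 0 2) x = 0 := by
  rw [glow02]; exact dfr_const _ _ _
lemma dg03 (Y : Fin 4) (x : Fin 4 → ℝ) : Dfr Y (gLow χ₁ χt₂ 0 3) x = 0 := by
  rw [glow03]; exact dfr_const _ _ _
lemma dg10 (Y : Fin 4) (x : Fin 4 → ℝ) : Dfr Y (gLow χ₁ χt₂ 1 0) x = 0 := by
  rw [glow10]; exact dfr_const _ _ _
lemma dg20 (Y : Fin 4) (x : Fin 4 → ℝ) : Dfr Y (gLow χ₁ χt₂ 2 0) x = 0 := by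
  rw [glow20]; exact dfr_const _ _ _
lemma dg30 (Y : Fin 4) (x : Fin 4 → ℝ) : Dfr Y (gLow χ₁ χt₂ 3 0) x = 0 := by
  rw [glow30]; exact dfr_const _ _ _
lemma dg23 (Y : Fin 4) (x : Fin 4 → ℝ) : Dfr Y (gLow χ₁ χt₂ 2 3) x = 0 := by
  rw [glow23]; exact dfr_const _ _ _
lemma dg32 (Y : Fin 4) (x : Fin 4 → ℝ) : Dfr Y (gLow χ₁ χt₂ 3 2) x = 0 := by
  rw [glow32]; exact dfr_const _ _ _

lemma dg11 (h₂ : ContDiff ℝ 2 χt₂) (Y : Fin 4) (x : Fin 4 → ℝ) :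
    Dfr Y (gLow χ₁ χt₂ 1 1) x
    = frameVec Y 0 * (-(χt₂ (x 1 - x 0)))
      + x 0 * ((frameVec Y 1 - frameVec Y 0) * (-(deriv χt₂ (x 1 - x 0)))) := by
  rw [glow11, dfr_coord_mul 0 (fun r => -(χt₂ r)) Y x
    ((hder_s χt₂ h₂ _).neg.differentiableAt),
    (show HasDerivAt (fun r => -(χt₂ r)) _ (x 1 - x 0) from (hder_s χt₂ h₂ (x 1 - x 0)).neg).deriv]

lemma dg12 (h₁ : ContDiff ℝ 2 χ₁) (h₂ : ContDiff ℝ 2 χt₂) (Y : Fin 4) (x : Fin 4 → ℝ) :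
    Dfr Y (gLow χ₁ χt₂ 1 2) x
    = frameVec Y 2 * (-(1/4) * ((1 + χ₁ (x 1 - x 0)) * χt₂ (x 1 - x 0)))
      + x 2 * ((frameVec Y 1 - frameVec Y 0) *
          (-(1/4) * (deriv χ₁ (x 1 - x 0) * χt₂ (x 1 - x 0)
            + (1 + χ₁ (x 1 - x 0)) * deriv χt₂ (x 1 - x 0)))) := by
  rw [glow12, dfr_coord_mul 2 (fun r => -(1/4) * ((1 + χ₁ r) * χt₂ r)) Y x
    (((hder_ps χ₁ χt₂ h₁ h₂ _).const_mul (-(1/4))).differentiableAt),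
    ((hder_ps χ₁ χt₂ h₁ h₂ (x 1 - x 0)).const_mul (-(1/4))).deriv]

lemma dg21 (h₁ : ContDiff ℝ 2 χ₁) (h₂ : ContDiff ℝ 2 χt₂) (Y : Fin 4) (x : Fin 4 → ℝ) :
    Dfr Y (gLow χ₁ χt₂ 2 1) x
    = frameVec Y 2 * (-(1/4) * ((1 + χ₁ (x 1 - x 0)) * χt₂ (x 1 - x 0)))
      + x 2 * ((frameVec Y 1 - frameVec Y 0) *
          (-(1/4) * (deriv χ₁ (x 1 - x 0) * χt₂ (x 1 - x 0)
            + (1 + χ₁ (x 1 - x 0)) * deriv χt₂ (x 1 - x 0)))) := by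
  rw [glow21, dfr_coord_mul 2 (fun r => -(1/4) * ((1 + χ₁ r) * χt₂ r)) Y x
    (((hder_ps χ₁ χt₂ h₁ h₂ _).const_mul (-(1/4))).differentiableAt),
    ((hder_ps χ₁ χt₂ h₁ h₂ (x 1 - x 0)).const_mul (-(1/4))).deriv]

lemma dg13 (h₁ : ContDiff ℝ 2 χ₁) (h₂ : ContDiff ℝ 2 χt₂)
    (hpos : ∀ r : ℝ, 0 < 1 + χ₁ r) (Y : Fin 4) (x : Fin 4 → ℝ) :
    Dfr Y (gLow χ₁ χt₂ 1 3) x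
    = frameVec Y 3 * (-(1/4) * ((1 + χ₁ (x 1 - x 0))⁻¹ * χt₂ (x 1 - x 0)))
      + x 3 * ((frameVec Y 1 - frameVec Y 0) *
          (-(1/4) * (-(deriv χ₁ (x 1 - x 0)) / (1 + χ₁ (x 1 - x 0))^2 * χt₂ (x 1 - x 0)
            + (1 + χ₁ (x 1 - x 0))⁻¹ * deriv χt₂ (x 1 - x 0)))) := by
  rw [glow13, dfr_coord_mul 3 (fun r => -(1/4) * ((1 + χ₁ r)⁻¹ * χt₂ r)) Y x
    (((hder_qs χ₁ χt₂ h₁ h₂ hpos _).const_mul (-(1/4))).differentiableAt),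
    ((hder_qs χ₁ χt₂ h₁ h₂ hpos (x 1 - x 0)).const_mul (-(1/4))).deriv]

lemma dg31 (h₁ : ContDiff ℝ 2 χ₁) (h₂ : ContDiff ℝ 2 χt₂)
    (hpos : ∀ r : ℝ, 0 < 1 + χ₁ r) (Y : Fin 4) (x : Fin 4 → ℝ) :
    Dfr Y (gLow χ₁ χt₂ 3 1) x
    = frameVec Y 3 * (-(1/4) * ((1 + χ₁ (x 1 - x 0))⁻¹ * χt₂ (x 1 - x 0)))
      + x 3 * ((frameVec Y 1 - frameVec Y 0) *
          (-(1/4) * (-(deriv χ₁ (x 1 - x 0)) / (1 + χ₁ (x 1 - x 0))^2 * χt₂ (x 1 - x 0)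
            + (1 + χ₁ (x 1 - x 0))⁻¹ * deriv χt₂ (x 1 - x 0)))) := by
  rw [glow31, dfr_coord_mul 3 (fun r => -(1/4) * ((1 + χ₁ r)⁻¹ * χt₂ r)) Y x
    (((hder_qs χ₁ χt₂ h₁ h₂ hpos _).const_mul (-(1/4))).differentiableAt),
    ((hder_qs χ₁ χt₂ h₁ h₂ hpos (x 1 - x 0)).const_mul (-(1/4))).deriv]

lemma dg22 (h₁ : ContDiff ℝ 2 χ₁) (Y : Fin 4) (x : Fin 4 → ℝ) :
    Dfr Y (gLow χ₁ χt₂ 2 2) x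
    = (frameVec Y 1 - frameVec Y 0) * deriv χ₁ (x 1 - x 0) := by
  rw [glow22, dfr_base (fun r => 1 + χ₁ r) Y x
    ((hder_p χ₁ h₁ _).differentiableAt),
    (hder_p χ₁ h₁ (x 1 - x 0)).deriv]

lemma dg33 (h₁ : ContDiff ℝ 2 χ₁) (hpos : ∀ r : ℝ, 0 < 1 + χ₁ r)
    (Y : Fin 4) (x : Fin 4 → ℝ) :
    Dfr Y (gLow χ₁ χt₂ 3 3) x
    = (frameVec Y 1 - frameVec Y 0)
        * (-(deriv χ₁ (x 1 - x 0)) / (1 + χ₁ (x 1 - x 0))^2) := by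
  rw [glow33, dfr_base (fun r => (1 + χ₁ r)⁻¹) Y x
    ((hder_q χ₁ h₁ hpos _).differentiableAt),
    (hder_q χ₁ h₁ hpos (x 1 - x 0)).deriv]

end DG

/- Christoffel symbols as functions -/
section GAM
variable (h₁ : ContDiff ℝ 2 χ₁) (h₂ : ContDiff ℝ 2 χt₂)
  (hpos : ∀ r : ℝ, 0 < 1 + χ₁ r)

set_option linter.unusedSectionVars false

@[simp] lemma fv00 : frameVec 0 0 = 1 := by simp [frameVec]
@[simp] lemma fv01 : frameVec 0 1 = 1 := by simp [frameVec]
@[simp] lemma fv02 : frameVec 0 2 = 0 := by simp [frameVec]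
@[simp] lemma fv03 : frameVec 0 3 = 0 := by simp [frameVec]
@[simp] lemma fv10 : frameVec 1 0 = 1 := by simp [frameVec]
@[simp] lemma fv11 : frameVec 1 1 = -1 := by simp [frameVec]
@[simp] lemma fv12 : frameVec 1 2 = 0 := by simp [frameVec]
@[simp] lemma fv13 : frameVec 1 3 = 0 := by simp [frameVec]
@[simp] lemma fv20 : frameVec 2 0 = 0 := by simp [frameVec]
@[simp] lemma fv21 : frameVec 2 1 = 0 := by simp [frameVec]
@[simp] lemma fv22 : frameVec 2 2 = 1 := by simp [frameVec]
@[simp] lemma fv23 : frameVec 2 3 = 0 := by simp [frameVec]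
@[simp] lemma fv30 : frameVec 3 0 = 0 := by simp [frameVec]
@[simp] lemma fv31 : frameVec 3 1 = 0 := by simp [frameVec]
@[simp] lemma fv32 : frameVec 3 2 = 0 := by simp [frameVec]
@[simp] lemma fv33 : frameVec 3 3 = 1 := by simp [frameVec]

include h₁ h₂ hpos

lemma gam211 : Gam χ₁ χt₂ 2 1 1 = fun _ => (0:ℝ) := by
  funext y
  simp only [Gam, dg11 χ₁ χt₂ h₂, dg12 χ₁ χt₂ h₁ h₂, dg21 χ₁ χt₂ h₁ h₂,
    fv20, fv21, fv22, fv23, fv10, fv11, fv12, fv13]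
  ring

lemma gam213 : Gam χ₁ χt₂ 2 1 3 = fun _ => (0:ℝ) := by
  funext y
  simp only [Gam, dg13 χ₁ χt₂ h₁ h₂ hpos, dg12 χ₁ χt₂ h₁ h₂, dg23 χ₁ χt₂,
    fv20, fv21, fv22, fv23, fv30, fv31, fv32, fv33, fv10, fv11]
  ring

lemma gam311 : Gam χ₁ χt₂ 3 1 1 = fun _ => (0:ℝ) := by
  funext y
  simp only [Gam, dg11 χ₁ χt₂ h₂, dg13 χ₁ χt₂ h₁ h₂ hpos, dg31 χ₁ χt₂ h₁ h₂ hpos,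
    fv30, fv31, fv32, fv33, fv10, fv11, fv12, fv13]
  ring

lemma gam312 : Gam χ₁ χt₂ 3 1 2 = fun _ => (0:ℝ) := by
  funext y
  simp only [Gam, dg12 χ₁ χt₂ h₁ h₂, dg13 χ₁ χt₂ h₁ h₂ hpos, dg32 χ₁ χt₂,
    fv30, fv31, fv32, fv33, fv20, fv21, fv22, fv23, fv10, fv11]
  ring

lemma gam212 : Gam χ₁ χt₂ 2 1 2
    = fun y => (fun r => deriv χ₁ r - (1/4) * ((1 + χ₁ r) * χt₂ r)) (y 1 - y 0) := by
  funext y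
  simp only [Gam, dg12 χ₁ χt₂ h₁ h₂, dg22 χ₁ χt₂ h₁,
    fv20, fv21, fv22, fv23, fv10, fv11]
  ring

lemma gam313 : Gam χ₁ χt₂ 3 1 3
    = fun y => (fun r => -(deriv χ₁ r) / (1 + χ₁ r)^2
        - (1/4) * ((1 + χ₁ r)⁻¹ * χt₂ r)) (y 1 - y 0) := by
  funext y
  simp only [Gam, dg13 χ₁ χt₂ h₁ h₂ hpos, dg33 χ₁ χt₂ h₁ hpos,
    fv30, fv31, fv32, fv33, fv10, fv11]
  ring

end GAM

/- gUp entry values -/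
section GUP
variable (x : Fin 4 → ℝ)

lemma gup00 : gUp χ₁ χt₂ 0 0 x
    = (1/4) * x 0 * χt₂ (x 1 - x 0)
       + ((x 2) ^ 2 * (1 + χ₁ (x 1 - x 0)) + (x 3) ^ 2 * (1 + χ₁ (x 1 - x 0))⁻¹)
           * (χt₂ (x 1 - x 0)) ^ 2 / 64 := by
  simp [gUp, Matrix.vecHead, Matrix.vecTail]
lemma gup01 : gUp χ₁ χt₂ 0 1 x = -(1/2) := by
  simp [gUp, Matrix.vecHead, Matrix.vecTail]
lemma gup10 : gUp χ₁ χt₂ 1 0 x = -(1/2) := by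
  simp [gUp, Matrix.vecHead, Matrix.vecTail]
lemma gup02 : gUp χ₁ χt₂ 0 2 x = -(1/8) * x 2 * χt₂ (x 1 - x 0) := by
  simp [gUp, Matrix.vecHead, Matrix.vecTail]
lemma gup20 : gUp χ₁ χt₂ 2 0 x = -(1/8) * x 2 * χt₂ (x 1 - x 0) := by
  simp [gUp, Matrix.vecHead, Matrix.vecTail]
lemma gup03 : gUp χ₁ χt₂ 0 3 x = -(1/8) * x 3 * χt₂ (x 1 - x 0) := by
  simp [gUp, Matrix.vecHead, Matrix.vecTail]
lemma gup30 : gUp χ₁ χt₂ 3 0 x = -(1/8) * x 3 * χt₂ (x 1 - x 0) := by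
  simp [gUp, Matrix.vecHead, Matrix.vecTail]
lemma gup11 : gUp χ₁ χt₂ 1 1 x = 0 := by
  simp [gUp, Matrix.vecHead, Matrix.vecTail]
lemma gup12 : gUp χ₁ χt₂ 1 2 x = 0 := by
  simp [gUp, Matrix.vecHead, Matrix.vecTail]
lemma gup13 : gUp χ₁ χt₂ 1 3 x = 0 := by
  simp [gUp, Matrix.vecHead, Matrix.vecTail]
lemma gup21 : gUp χ₁ χt₂ 2 1 x = 0 := by
  simp [gUp, Matrix.vecHead, Matrix.vecTail]
lemma gup31 : gUp χ₁ χt₂ 3 1 x = 0 := by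
  simp [gUp, Matrix.vecHead, Matrix.vecTail]
lemma gup23 : gUp χ₁ χt₂ 2 3 x = 0 := by
  simp [gUp, Matrix.vecHead, Matrix.vecTail]
lemma gup32 : gUp χ₁ χt₂ 3 2 x = 0 := by
  simp [gUp, Matrix.vecHead, Matrix.vecTail]
lemma gup22 : gUp χ₁ χt₂ 2 2 x = (1 + χ₁ (x 1 - x 0))⁻¹ := by
  simp [gUp, Matrix.vecHead, Matrix.vecTail]
lemma gup33 : gUp χ₁ χt₂ 3 3 x = 1 + χ₁ (x 1 - x 0) := by
  simp [gUp, Matrix.vecHead, Matrix.vecTail]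

end GUP

end CurvAux

set_option maxHeartbeats 4000000 in
open CurvAux in
/-- for `A, B ∈ {2,3}`,
`R_{AL̲BL̲} = δ_{AB}·[½χ′_{2A} - 2χ″_{1A} + χ_{1A}⁻¹(χ′_{1A})² + ¼χ̃₂(-¼χ_{2A} + χ′_{1A})]`
with `χ_{2A} = χ_{1A}·χ̃₂`, everything evaluated at `x₁ - t`. -/
theorem curvature_ALbBLb (χ₁ χt₂ : ℝ → ℝ)
    (h₁ : ContDiff ℝ 2 χ₁) (h₂ : ContDiff ℝ 2 χt₂)
    (hpos : ∀ r : ℝ, 0 < 1 + χ₁ r) :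
    ∀ A B : Fin 4, (A = 2 ∨ A = 3) → (B = 2 ∨ B = 3) → ∀ x : Fin 4 → ℝ,
      Riem χ₁ χt₂ A 1 B 1 x
        = (if A = B then (1:ℝ) else 0) *
            ((1/2) * deriv (fun r => cOne χ₁ A r * χt₂ r) (x 1 - x 0)
              - 2 * deriv (deriv (cOne χ₁ A)) (x 1 - x 0)
              + (cOne χ₁ A (x 1 - x 0))⁻¹ * (deriv (cOne χ₁ A) (x 1 - x 0)) ^ 2
              + (1/4) * χt₂ (x 1 - x 0) *
                  (-(1/4) * (cOne χ₁ A (x 1 - x 0) * χt₂ (x 1 - x 0))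
                    + deriv (cOne χ₁ A) (x 1 - x 0))) := by
  intro A B hA hB x
  have pnz : (1 + χ₁ (x 1 - x 0)) ≠ 0 := ne_of_gt (hpos _)
  have hdP : deriv (fun r => 1 + χ₁ r) = deriv χ₁ :=
    funext fun r => (hder_p χ₁ h₁ r).deriv
  have hdQ : deriv (fun r => (1 + χ₁ r)⁻¹)
      = fun r => -(deriv χ₁ r) / (1 + χ₁ r)^2 :=
    funext fun r => (hder_q χ₁ h₁ hpos r).deriv
  have hps := hder_ps χ₁ χt₂ h₁ h₂ (x 1 - x 0)
  have hqs := hder_qs χ₁ χt₂ h₁ h₂ hpos (x 1 - x 0)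
  have hc2 : cOne χ₁ 2 = fun r => 1 + χ₁ r := by simp [cOne]
  have hc3 : cOne χ₁ 3 = fun r => (1 + χ₁ r)⁻¹ := by simp [cOne]
  rcases hA with rfl | rfl <;> rcases hB with rfl | rfl
  · -- A = 2, B = 2
    have hG : HasDerivAt
        (fun r => deriv χ₁ r - (1/4) * ((1 + χ₁ r) * χt₂ r))
        (deriv (deriv χ₁) (x 1 - x 0)
          - (1/4) * (deriv χ₁ (x 1 - x 0) * χt₂ (x 1 - x 0)
              + (1 + χ₁ (x 1 - x 0)) * deriv χt₂ (x 1 - x 0))) (x 1 - x 0) :=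
      (hder_d1 χ₁ h₁ _).sub ((hder_ps χ₁ χt₂ h₁ h₂ _).const_mul (1/4))
    simp only [Riem, Fin.sum_univ_four]
    rw [gam212 χ₁ χt₂ h₁ h₂ hpos, gam211 χ₁ χt₂ h₁ h₂ hpos]
    rw [dfr_base _ 1 x hG.differentiableAt, hG.deriv, dfr_const]
    simp only [Gam, dg00 χ₁ χt₂, dg01 χ₁ χt₂, dg02 χ₁ χt₂, dg03 χ₁ χt₂,
      dg10 χ₁ χt₂, dg20 χ₁ χt₂, dg30 χ₁ χt₂, dg23 χ₁ χt₂, dg32 χ₁ χt₂,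
      dg11 χ₁ χt₂ h₂, dg12 χ₁ χt₂ h₁ h₂, dg21 χ₁ χt₂ h₁ h₂,
      dg13 χ₁ χt₂ h₁ h₂ hpos, dg31 χ₁ χt₂ h₁ h₂ hpos,
      dg22 χ₁ χt₂ h₁, dg33 χ₁ χt₂ h₁ hpos,
      fv00, fv01, fv02, fv03, fv10, fv11, fv12, fv13,
      fv20, fv21, fv22, fv23, fv30, fv31, fv32, fv33]
    simp only [gup00 χ₁ χt₂ x, gup01 χ₁ χt₂ x, gup02 χ₁ χt₂ x, gup03 χ₁ χt₂ x,
      gup10 χ₁ χt₂ x, gup11 χ₁ χt₂ x, gup12 χ₁ χt₂ x, gup13 χ₁ χt₂ x,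
      gup20 χ₁ χt₂ x, gup21 χ₁ χt₂ x, gup22 χ₁ χt₂ x, gup23 χ₁ χt₂ x,
      gup30 χ₁ χt₂ x, gup31 χ₁ χt₂ x, gup32 χ₁ χt₂ x, gup33 χ₁ χt₂ x]
    simp only [hc2, hdP, if_pos rfl, ↓reduceIte]
    rw [hps.deriv]
    field_simp
    ring
  · -- A = 2, B = 3
    simp only [Riem, Fin.sum_univ_four]
    rw [gam213 χ₁ χt₂ h₁ h₂ hpos, gam211 χ₁ χt₂ h₁ h₂ hpos]
    rw [dfr_const 0 1 x, dfr_const 0 3 x]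
    simp only [Gam, dg00 χ₁ χt₂, dg01 χ₁ χt₂, dg02 χ₁ χt₂, dg03 χ₁ χt₂,
      dg10 χ₁ χt₂, dg20 χ₁ χt₂, dg30 χ₁ χt₂, dg23 χ₁ χt₂, dg32 χ₁ χt₂,
      dg11 χ₁ χt₂ h₂, dg12 χ₁ χt₂ h₁ h₂, dg21 χ₁ χt₂ h₁ h₂,
      dg13 χ₁ χt₂ h₁ h₂ hpos, dg31 χ₁ χt₂ h₁ h₂ hpos,
      dg22 χ₁ χt₂ h₁, dg33 χ₁ χt₂ h₁ hpos,
      fv00, fv01, fv02, fv03, fv10, fv11, fv12, fv13,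
      fv20, fv21, fv22, fv23, fv30, fv31, fv32, fv33]
    simp only [gup00 χ₁ χt₂ x, gup01 χ₁ χt₂ x, gup02 χ₁ χt₂ x, gup03 χ₁ χt₂ x,
      gup10 χ₁ χt₂ x, gup11 χ₁ χt₂ x, gup12 χ₁ χt₂ x, gup13 χ₁ χt₂ x,
      gup20 χ₁ χt₂ x, gup21 χ₁ χt₂ x, gup22 χ₁ χt₂ x, gup23 χ₁ χt₂ x,
      gup30 χ₁ χt₂ x, gup31 χ₁ χt₂ x, gup32 χ₁ χt₂ x, gup33 χ₁ χt₂ x]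
    rw [if_neg (by decide)]
    ring
  · -- A = 3, B = 2
    simp only [Riem, Fin.sum_univ_four]
    rw [gam312 χ₁ χt₂ h₁ h₂ hpos, gam311 χ₁ χt₂ h₁ h₂ hpos]
    rw [dfr_const 0 1 x, dfr_const 0 2 x]
    simp only [Gam, dg00 χ₁ χt₂, dg01 χ₁ χt₂, dg02 χ₁ χt₂, dg03 χ₁ χt₂,
      dg10 χ₁ χt₂, dg20 χ₁ χt₂, dg30 χ₁ χt₂, dg23 χ₁ χt₂, dg32 χ₁ χt₂,
      dg11 χ₁ χt₂ h₂, dg12 χ₁ χt₂ h₁ h₂, dg21 χ₁ χt₂ h₁ h₂,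
      dg13 χ₁ χt₂ h₁ h₂ hpos, dg31 χ₁ χt₂ h₁ h₂ hpos,
      dg22 χ₁ χt₂ h₁, dg33 χ₁ χt₂ h₁ hpos,
      fv00, fv01, fv02, fv03, fv10, fv11, fv12, fv13,
      fv20, fv21, fv22, fv23, fv30, fv31, fv32, fv33]
    simp only [gup00 χ₁ χt₂ x, gup01 χ₁ χt₂ x, gup02 χ₁ χt₂ x, gup03 χ₁ χt₂ x,
      gup10 χ₁ χt₂ x, gup11 χ₁ χt₂ x, gup12 χ₁ χt₂ x, gup13 χ₁ χt₂ x,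
      gup20 χ₁ χt₂ x, gup21 χ₁ χt₂ x, gup22 χ₁ χt₂ x, gup23 χ₁ χt₂ x,
      gup30 χ₁ χt₂ x, gup31 χ₁ χt₂ x, gup32 χ₁ χt₂ x, gup33 χ₁ χt₂ x]
    rw [if_neg (by decide)]
    ring
  · -- A = 3, B = 3
    have hq2 : HasDerivAt (fun r => -(deriv χ₁ r) / (1 + χ₁ r)^2) _ (x 1 - x 0) := ((hder_d1 χ₁ h₁ (x 1 - x 0)).neg).div
      ((hder_p χ₁ h₁ (x 1 - x 0)).pow 2) (pow_ne_zero 2 pnz)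
    have hG : HasDerivAt (fun r => -(deriv χ₁ r) / (1 + χ₁ r)^2
        - (1/4) * ((1 + χ₁ r)⁻¹ * χt₂ r)) _ (x 1 - x 0) := hq2.sub ((hder_qs χ₁ χt₂ h₁ h₂ hpos (x 1 - x 0)).const_mul (1/4))
    simp only [Riem, Fin.sum_univ_four]
    rw [gam313 χ₁ χt₂ h₁ h₂ hpos, gam311 χ₁ χt₂ h₁ h₂ hpos]
    rw [dfr_base _ 1 x hG.differentiableAt, hG.deriv, dfr_const]
    simp only [Gam, dg00 χ₁ χt₂, dg01 χ₁ χt₂, dg02 χ₁ χt₂, dg03 χ₁ χt₂,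
      dg10 χ₁ χt₂, dg20 χ₁ χt₂, dg30 χ₁ χt₂, dg23 χ₁ χt₂, dg32 χ₁ χt₂,
      dg11 χ₁ χt₂ h₂, dg12 χ₁ χt₂ h₁ h₂, dg21 χ₁ χt₂ h₁ h₂,
      dg13 χ₁ χt₂ h₁ h₂ hpos, dg31 χ₁ χt₂ h₁ h₂ hpos,
      dg22 χ₁ χt₂ h₁, dg33 χ₁ χt₂ h₁ hpos,
      fv00, fv01, fv02, fv03, fv10, fv11, fv12, fv13,
      fv20, fv21, fv22, fv23, fv30, fv31, fv32, fv33]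
    simp only [gup00 χ₁ χt₂ x, gup01 χ₁ χt₂ x, gup02 χ₁ χt₂ x, gup03 χ₁ χt₂ x,
      gup10 χ₁ χt₂ x, gup11 χ₁ χt₂ x, gup12 χ₁ χt₂ x, gup13 χ₁ χt₂ x,
      gup20 χ₁ χt₂ x, gup21 χ₁ χt₂ x, gup22 χ₁ χt₂ x, gup23 χ₁ χt₂ x,
      gup30 χ₁ χt₂ x, gup31 χ₁ χt₂ x, gup32 χ₁ χt₂ x, gup33 χ₁ χt₂ x]
    simp only [hc3, hdQ, if_pos rfl, ↓reduceIte]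
    rw [hqs.deriv, hq2.deriv]
    field_simp
    ring

end
end

section
/- There exists ε₀ > 0 such that for every ε ∈ (0, ε₀] and every α ∈ (0, 1/2), there is a continuous function χ̃₂ : [−1, 1] → ℝ satisfying the integral equation χ̃₂(x) = ∫₀ˣ [2χ₁′(s)²(1 + χ₁(s))⁻² + χ̃₂(s)²/16] ds for all x ∈ [−1, 1], and moreover |χ̃₂(x)| ≤ 2 and |χ₁(x)| ≤ ½ for all x ∈ [−1, 1]. -/
open Set MeasureTheory intervalIntegral
open scoped Interval

namespace Chi2Aux

noncomputable def L (α s : ℝ) : ℝ := (Real.log (4 / |s|)) ^ α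
noncomputable def G (s : ℝ) : ℝ := Real.log 4 + 2 * |s| ^ (-(1/2) : ℝ)

lemma absRpow_ii_01 : IntervalIntegrable (fun s : ℝ => |s| ^ (-(1/2) : ℝ)) volume 0 1 := by
  rw [intervalIntegrable_iff, uIoc_of_le (by norm_num : (0:ℝ) ≤ 1)]
  refine (IntegrableOn.congr_fun (f := fun x : ℝ => x ^ (-(1/2) : ℝ)) ?_ (fun x hx => ?_) measurableSet_Ioc)
  · have h := intervalIntegrable_rpow' (a := 0) (b := 1) (r := -(1/2)) (by norm_num)
    rw [intervalIntegrable_iff, uIoc_of_le (by norm_num : (0:ℝ) ≤ 1)] at h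
    exact h
  · simp [abs_of_pos hx.1]

lemma absRpow_ii : IntervalIntegrable (fun s : ℝ => |s| ^ (-(1/2) : ℝ)) volume (-1) 1 := by
  have h1 : IntervalIntegrable (fun s : ℝ => |s| ^ (-(1/2) : ℝ)) volume (-1) 0 := by
    have := (IntervalIntegrable.iff_comp_neg
      (f := fun s : ℝ => |s| ^ (-(1/2) : ℝ)) (a := 1) (b := 0)).mp absRpow_ii_01.symm
    simpa using this
  exact h1.trans absRpow_ii_01

lemma absRpow_integral_01 : ∫ s in (0:ℝ)..1, |s| ^ (-(1/2) : ℝ) = 2 := by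
  have : ∫ s in (0:ℝ)..1, |s| ^ (-(1/2) : ℝ) = ∫ s in (0:ℝ)..1, s ^ (-(1/2) : ℝ) := by
    refine integral_congr fun x hx => ?_
    rw [uIcc_of_le (by norm_num : (0:ℝ) ≤ 1)] at hx
    rw [abs_of_nonneg hx.1]
  rw [this, integral_rpow (Or.inl (by norm_num))]
  norm_num [Real.zero_rpow]

lemma absRpow_integral : ∫ s in (-1:ℝ)..1, |s| ^ (-(1/2) : ℝ) = 4 := by
  have hsplit := integral_add_adjacent_intervals
    (f := fun s : ℝ => |s| ^ (-(1/2) : ℝ)) (μ := volume)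
    (a := -1) (b := 0) (c := 1)
    (by have := (IntervalIntegrable.iff_comp_neg
          (f := fun s : ℝ => |s| ^ (-(1/2) : ℝ)) (a := 1) (b := 0)).mp absRpow_ii_01.symm
        simpa using this) absRpow_ii_01
  have hneg : ∫ s in (-1:ℝ)..0, |s| ^ (-(1/2) : ℝ) = 2 := by
    have := integral_comp_neg (a := 0) (b := 1) (fun s : ℝ => |s| ^ (-(1/2) : ℝ))
    simp only [abs_neg, neg_zero, neg_neg] at this
    rw [← this, absRpow_integral_01]
  rw [← hsplit, hneg, absRpow_integral_01]
  norm_num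


lemma one_le_log4 : 1 ≤ Real.log 4 := by
  rw [Real.le_log_iff_exp_le (by norm_num)]
  have := Real.exp_one_lt_d9
  linarith

lemma log4_le : Real.log 4 ≤ 1.4 := by
  have h4 : (4:ℝ) = 2 ^ (2:ℕ) := by norm_num
  rw [h4, Real.log_pow]
  have := Real.log_two_lt_d9
  norm_num
  linarith

lemma G_nonneg (s : ℝ) : 0 ≤ G s := by
  have h1 : (0:ℝ) ≤ |s| ^ (-(1/2) : ℝ) := Real.rpow_nonneg (abs_nonneg s) _
  have := one_le_log4
  unfold G; linarith

lemma neg_log_le (t : ℝ) (ht : 0 < t) : -Real.log t ≤ 2 * t ^ (-(1/2) : ℝ) := by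
  have h1 : Real.log (t ^ (-(1/2) : ℝ)) = (-(1/2)) * Real.log t := Real.log_rpow ht _
  have h2 : Real.log (t ^ (-(1/2) : ℝ)) ≤ t ^ (-(1/2) : ℝ) - 1 :=
    Real.log_le_sub_one_of_pos (Real.rpow_pos_of_pos ht _)
  have h3 : (0:ℝ) ≤ t ^ (-(1/2) : ℝ) := Real.rpow_nonneg ht.le _
  linarith

/-- Key pointwise bound: for `0 < β ≤ 1` and `s ∈ [-1,1]`, `(log(4/|s|))^β ≤ G s`. -/
lemma rpow_log_le_G {β s : ℝ} (hβ0 : 0 < β) (hβ1 : β ≤ 1) (hs : s ∈ Icc (-1:ℝ) 1) :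
    (Real.log (4 / |s|)) ^ β ≤ G s := by
  rcases eq_or_ne s 0 with rfl | hs0
  · simp [Real.zero_rpow hβ0.ne', G_nonneg]
  · have habs : 0 < |s| := abs_pos.mpr hs0
    have habs1 : |s| ≤ 1 := abs_le.mpr ⟨hs.1, hs.2⟩
    have hb : 1 ≤ Real.log (4 / |s|) := by
      have h4 : (4:ℝ) ≤ 4 / |s| := by
        rw [le_div_iff₀ habs]; nlinarith
      calc (1:ℝ) ≤ Real.log 4 := one_le_log4
        _ ≤ Real.log (4 / |s|) := Real.log_le_log (by norm_num) h4
    calc (Real.log (4 / |s|)) ^ β ≤ (Real.log (4 / |s|)) ^ (1:ℝ) :=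
          Real.rpow_le_rpow_of_exponent_le hb hβ1
      _ = Real.log (4 / |s|) := Real.rpow_one _
      _ = Real.log 4 - Real.log |s| := Real.log_div (by norm_num) habs.ne'
      _ ≤ Real.log 4 + 2 * |s| ^ (-(1/2) : ℝ) := by
          have := neg_log_le |s| habs; linarith
      _ = G s := rfl

lemma L_nonneg {α s : ℝ} (hα : 0 < α) (hs : s ∈ Icc (-1:ℝ) 1) : 0 ≤ L α s := by
  rcases eq_or_ne s 0 with rfl | hs0
  · simp [L, Real.zero_rpow hα.ne']
  · have habs : 0 < |s| := abs_pos.mpr hs0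
    have habs1 : |s| ≤ 1 := abs_le.mpr ⟨hs.1, hs.2⟩
    have hb : 0 ≤ Real.log (4 / |s|) := by
      apply Real.log_nonneg
      rw [le_div_iff₀ habs]; nlinarith
    exact Real.rpow_nonneg hb _

lemma L_le_G {α s : ℝ} (hα0 : 0 < α) (hα1 : α ≤ 1) (hs : s ∈ Icc (-1:ℝ) 1) :
    L α s ≤ G s := rpow_log_le_G hα0 hα1 hs

lemma L_sq_le_G {α s : ℝ} (hα0 : 0 < α) (hα1 : α < 1/2) (hs : s ∈ Icc (-1:ℝ) 1) :
    (L α s) ^ 2 ≤ G s := by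
  rcases eq_or_ne s 0 with rfl | hs0
  · simp [L, Real.zero_rpow hα0.ne', G_nonneg]
  · have habs : 0 < |s| := abs_pos.mpr hs0
    have habs1 : |s| ≤ 1 := abs_le.mpr ⟨hs.1, hs.2⟩
    have hb : 1 ≤ Real.log (4 / |s|) := by
      have h4 : (4:ℝ) ≤ 4 / |s| := by rw [le_div_iff₀ habs]; nlinarith
      calc (1:ℝ) ≤ Real.log 4 := one_le_log4
        _ ≤ Real.log (4 / |s|) := Real.log_le_log (by norm_num) h4
    have hsq : (L α s) ^ 2 = (Real.log (4 / |s|)) ^ (2 * α) := by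
      unfold L
      rw [sq, ← Real.rpow_add (by linarith), two_mul]
    rw [hsq]
    exact rpow_log_le_G (by linarith) (by linarith) hs

lemma measurable_L {α : ℝ} (hα : 0 < α) : Measurable (L α) := by
  unfold L
  exact (Real.continuous_rpow_const hα.le).measurable.comp
    (Real.measurable_log.comp (measurable_const.div measurable_abs))


lemma G_ii : IntervalIntegrable G volume (-1) 1 :=
  intervalIntegrable_const.add (absRpow_ii.const_mul 2)

lemma G_intOn : IntegrableOn G (Icc (-1:ℝ) 1) volume := by
  rw [integrableOn_Icc_iff_integrableOn_Ioc]
  have := G_ii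
  rwa [intervalIntegrable_iff, uIoc_of_le (by norm_num : (-1:ℝ) ≤ 1)] at this

lemma G_setIntegral_le : ∫ s in Icc (-1:ℝ) 1, G s ≤ 11 := by
  rw [integral_Icc_eq_integral_Ioc,
    ← intervalIntegral.integral_of_le (by norm_num : (-1:ℝ) ≤ 1)]
  have : ∫ s in (-1:ℝ)..1, G s
      = (∫ _ in (-1:ℝ)..1, Real.log 4) + 2 * ∫ s in (-1:ℝ)..1, |s| ^ (-(1/2) : ℝ) := by
    rw [← intervalIntegral.integral_const_mul,
      ← intervalIntegral.integral_add intervalIntegrable_const (absRpow_ii.const_mul 2)]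
    rfl
  rw [this, absRpow_integral, intervalIntegral.integral_const]
  have := log4_le
  norm_num
  linarith

lemma L_intOn {α : ℝ} (hα0 : 0 < α) (hα1 : α ≤ 1) :
    IntegrableOn (L α) (Icc (-1:ℝ) 1) volume := by
  refine Integrable.mono' G_intOn (measurable_L hα0).aestronglyMeasurable ?_
  refine (ae_restrict_mem measurableSet_Icc).mono fun s hs => ?_
  rw [Real.norm_eq_abs, abs_of_nonneg (L_nonneg hα0 hs)]
  exact L_le_G hα0 hα1 hs

lemma L_ii {α : ℝ} (hα0 : 0 < α) (hα1 : α ≤ 1) :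
    IntervalIntegrable (L α) volume (-1) 1 := by
  apply IntegrableOn.intervalIntegrable
  rw [uIcc_of_le (by norm_num : (-1:ℝ) ≤ 1)]
  exact L_intOn hα0 hα1

/-- Generic bound for primitives of functions dominated by `c•G + d` on `[-1,1]`. -/
lemma primitive_bound {f : ℝ → ℝ} {c d : ℝ} (hc : 0 ≤ c) (hd : 0 ≤ d)
    (hf_int : IntegrableOn f (Icc (-1:ℝ) 1) volume)
    (hfG : ∀ s ∈ Icc (-1:ℝ) 1, ‖f s‖ ≤ c * G s + d) {x : ℝ} (hx : x ∈ Icc (-1:ℝ) 1) :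
    |∫ s in (0:ℝ)..x, f s| ≤ c * 11 + 2 * d := by
  have hsub : Ι (0:ℝ) x ⊆ Icc (-1:ℝ) 1 :=
    uIoc_subset_uIcc.trans (uIcc_subset_Icc (by norm_num) hx)
  have hGd_int : IntegrableOn (fun s => c * G s + d) (Icc (-1:ℝ) 1) volume := by
    refine (G_intOn.const_mul c).add ?_
    exact integrableOn_const measure_Icc_lt_top.ne
  have h1 : |∫ s in (0:ℝ)..x, f s| ≤ ∫ s in Ι (0:ℝ) x, ‖f s‖ := by
    rw [← Real.norm_eq_abs]
    exact intervalIntegral.norm_integral_le_integral_norm_uIoc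
  have h2 : ∫ s in Ι (0:ℝ) x, ‖f s‖ ≤ ∫ s in Ι (0:ℝ) x, (c * G s + d) :=
    setIntegral_mono_on ((hf_int.mono_set hsub).norm)
      (hGd_int.mono_set hsub) measurableSet_uIoc fun s hs => hfG s (hsub hs)
  have h3 : ∫ s in Ι (0:ℝ) x, (c * G s + d) ≤ ∫ s in Icc (-1:ℝ) 1, (c * G s + d) := by
    refine setIntegral_mono_set hGd_int ?_ (HasSubset.Subset.eventuallyLE hsub)
    filter_upwards with s
    have := G_nonneg s
    simp only [Pi.zero_apply]
    nlinarith
  have h4 : ∫ s in Icc (-1:ℝ) 1, (c * G s + d) = c * (∫ s in Icc (-1:ℝ) 1, G s) + d * 2 := by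
    rw [integral_add (G_intOn.const_mul c)
      (integrableOn_const measure_Icc_lt_top.ne),
      MeasureTheory.integral_const_mul, setIntegral_const, Real.volume_real_Icc]
    norm_num
    ring
  have h5 := G_setIntegral_le
  nlinarith

noncomputable def chi1 (ε α x : ℝ) : ℝ := ε * ∫ s in (0:ℝ)..x, L α s

section
variable {ε α : ℝ} (hε : 0 < ε) (hε' : ε ≤ 1/22) (hα0 : 0 < α) (hα1 : α < 1/2)
include hε hε' hα0 hα1

lemma chi1_bound : ∀ x ∈ Icc (-1:ℝ) 1, |chi1 ε α x| ≤ 1/2 := by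
  intro x hx
  have h := primitive_bound (c := 1) (d := 0) (by norm_num) le_rfl
    (L_intOn hα0 (by linarith)) (fun s hs => by
      rw [Real.norm_eq_abs, abs_of_nonneg (L_nonneg hα0 hs)]
      have := L_le_G hα0 (by linarith) hs
      linarith) hx
  have : |chi1 ε α x| = ε * |∫ s in (0:ℝ)..x, L α s| := by
    rw [chi1, abs_mul, abs_of_pos hε]
  rw [this]
  nlinarith

lemma chi1_cont : ContinuousOn (chi1 ε α) (Icc (-1:ℝ) 1) := by
  have h := intervalIntegral.continuousOn_primitive_interval' (L_ii hα0 (by linarith))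
    (by rw [uIcc_of_le (by norm_num : (-1:ℝ) ≤ 1)]; norm_num : (0:ℝ) ∈ uIcc (-1:ℝ) 1)
  rw [uIcc_of_le (by norm_num : (-1:ℝ) ≤ 1)] at h
  exact continuousOn_const.mul h

lemma inv_sq_le : ∀ s ∈ Icc (-1:ℝ) 1, ((1 + chi1 ε α s) ^ 2)⁻¹ ≤ 4 := by
  intro s hs
  have h := chi1_bound hε hε' hα0 hα1 s hs
  have h1 : (1/2 : ℝ) ≤ 1 + chi1 ε α s := by
    have := abs_le.mp h
    linarith [this.1]
  have h2 : (1/4 : ℝ) ≤ (1 + chi1 ε α s) ^ 2 := by nlinarith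
  calc ((1 + chi1 ε α s) ^ 2)⁻¹ ≤ (1/4 : ℝ)⁻¹ := by
        apply inv_anti₀ (by norm_num) h2
    _ = 4 := by norm_num

lemma one_add_chi1_pos : ∀ s ∈ Icc (-1:ℝ) 1, (0:ℝ) < 1 + chi1 ε α s := by
  intro s hs
  have h := chi1_bound hε hε' hα0 hα1 s hs
  have := abs_le.mp h
  linarith [this.1]

end

/-- The integrand of the fixed-point equation, in the exact syntactic form of the statement. -/
noncomputable def Fi (ε α : ℝ) (χ : ℝ → ℝ) (s : ℝ) : ℝ :=
  2 * (ε * (Real.log (4 / |s|)) ^ α) ^ 2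
      * ((1 + ε * ∫ r in (0:ℝ)..s, (Real.log (4 / |r|)) ^ α) ^ 2)⁻¹
    + (χ s) ^ 2 / 16

lemma Fi_eq (ε α : ℝ) (χ : ℝ → ℝ) (s : ℝ) :
    Fi ε α χ s = 2 * (ε * L α s) ^ 2 * ((1 + chi1 ε α s) ^ 2)⁻¹ + (χ s) ^ 2 / 16 := rfl

lemma Fi_nonneg (ε α : ℝ) (χ : ℝ → ℝ) (s : ℝ) : 0 ≤ Fi ε α χ s := by
  unfold Fi; positivity

section
variable {ε α : ℝ} (hε : 0 < ε) (hε' : ε ≤ 1/22) (hα0 : 0 < α) (hα1 : α < 1/2)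
  {χ : ℝ → ℝ} (hχb : ∀ s, |χ s| ≤ 2)
include hε hε' hα0 hα1 hχb

lemma Fi_le : ∀ s ∈ Icc (-1:ℝ) 1, Fi ε α χ s ≤ 8 * ε ^ 2 * G s + 1/4 := by
  intro s hs
  rw [Fi_eq]
  have hL2 := L_sq_le_G hα0 hα1 hs
  have hinv := inv_sq_le hε hε' hα0 hα1 s hs
  have hinv0 : (0:ℝ) ≤ ((1 + chi1 ε α s) ^ 2)⁻¹ := by positivity
  have hχ2 : (χ s) ^ 2 ≤ 4 := by
    have h1 := hχb s
    have h2 := abs_nonneg (χ s)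
    have h3 := sq_abs (χ s)
    nlinarith
  have ht1 : 2 * (ε * L α s) ^ 2 * ((1 + chi1 ε α s) ^ 2)⁻¹
      ≤ 2 * (ε * L α s) ^ 2 * 4 := by
    have h0 : (0:ℝ) ≤ 2 * (ε * L α s) ^ 2 := by positivity
    nlinarith
  have ht2 : 2 * (ε * L α s) ^ 2 * 4 ≤ 8 * ε ^ 2 * G s := by
    have h0 : (0:ℝ) ≤ ε ^ 2 := sq_nonneg ε
    have : (ε * L α s) ^ 2 = ε ^ 2 * (L α s) ^ 2 := by ring
    nlinarith
  linarith

lemma Fi_intOn (hχc : Continuous χ) :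
    IntegrableOn (Fi ε α χ) (Icc (-1:ℝ) 1) volume := by
  have hdom : IntegrableOn (fun s => 8 * ε ^ 2 * G s + 1/4) (Icc (-1:ℝ) 1) volume :=
    (G_intOn.const_mul _).add (integrableOn_const measure_Icc_lt_top.ne)
  refine Integrable.mono' hdom ?_ ?_
  · have m1 : Measurable (fun s => 2 * (ε * L α s) ^ 2) := by
      have := measurable_L hα0
      fun_prop
    have c2 : ContinuousOn (fun s => ((1 + chi1 ε α s) ^ 2)⁻¹) (Icc (-1:ℝ) 1) := by
      refine ContinuousOn.inv₀ ((continuousOn_const.add (chi1_cont hε hε' hα0 hα1)).pow 2)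
        fun s hs => ?_
      have := one_add_chi1_pos hε hε' hα0 hα1 s hs
      positivity
    have h1 : AEStronglyMeasurable
        (fun s => 2 * (ε * L α s) ^ 2 * ((1 + chi1 ε α s) ^ 2)⁻¹)
        (volume.restrict (Icc (-1:ℝ) 1)) :=
      m1.aestronglyMeasurable.mul (c2.aestronglyMeasurable measurableSet_Icc)
    have h2 : AEStronglyMeasurable (fun s => (χ s) ^ 2 / 16)
        (volume.restrict (Icc (-1:ℝ) 1)) := ((hχc.pow 2).div_const 16).aestronglyMeasurable
    exact h1.add h2
  · refine (ae_restrict_mem measurableSet_Icc).mono fun s hs => ?_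
    rw [Real.norm_eq_abs, abs_of_nonneg (Fi_nonneg ε α χ s)]
    exact Fi_le hε hε' hα0 hα1 hχb s hs

lemma Fi_ii (hχc : Continuous χ) {x : ℝ} (hx : x ∈ Icc (-1:ℝ) 1) :
    IntervalIntegrable (Fi ε α χ) volume 0 x := by
  apply IntegrableOn.intervalIntegrable
  exact (Fi_intOn hε hε' hα0 hα1 hχb hχc).mono_set (uIcc_subset_Icc (by norm_num) hx)

lemma Fi_primitive_bound (hχc : Continuous χ) {x : ℝ} (hx : x ∈ Icc (-1:ℝ) 1) :
    |∫ s in (0:ℝ)..x, Fi ε α χ s| ≤ 1 := by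
  have h := primitive_bound (c := 8 * ε ^ 2) (d := 1/4) (by positivity) (by norm_num)
    (Fi_intOn hε hε' hα0 hα1 hχb hχc) (fun s hs => by
      rw [Real.norm_eq_abs, abs_of_nonneg (Fi_nonneg ε α χ s)]
      exact Fi_le hε hε' hα0 hα1 hχb s hs) hx
  nlinarith

end
end Chi2Aux

open Chi2Aux

/-- there exists `ε₀ > 0` such that for every `ε ∈ (0, ε₀]` and every
`α ∈ (0, 1/2)` there is a continuous `χ̃₂ : [-1,1] → ℝ` solving the integral equation
`χ̃₂(x) = ∫₀ˣ [2χ₁′(s)²(1 + χ₁(s))⁻² + χ̃₂(s)²/16] ds`, with `|χ̃₂| ≤ 2` and `|χ₁| ≤ ½`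
on `[-1,1]`, where `χ₁(x) = ε∫₀ˣ (log(4/|s|))^α ds` and `χ₁′(s) = ε(log(4/|s|))^α`. -/
theorem exists_chi2_tilde :
    ∃ ε₀ : ℝ, 0 < ε₀ ∧
      ∀ ε : ℝ, 0 < ε → ε ≤ ε₀ → ∀ α : ℝ, 0 < α → α < 1/2 →
        ∃ χt₂ : ℝ → ℝ, ContinuousOn χt₂ (Icc (-1) 1) ∧
          (∀ x ∈ Icc (-1:ℝ) 1,
            χt₂ x = ∫ s in (0:ℝ)..x,
              (2 * (ε * (Real.log (4 / |s|)) ^ α) ^ 2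
                  * ((1 + ε * ∫ r in (0:ℝ)..s, (Real.log (4 / |r|)) ^ α) ^ 2)⁻¹
                + (χt₂ s) ^ 2 / 16)) ∧
          (∀ x ∈ Icc (-1:ℝ) 1, |χt₂ x| ≤ 2) ∧
          (∀ x ∈ Icc (-1:ℝ) 1,
            |ε * ∫ s in (0:ℝ)..x, (Real.log (4 / |s|)) ^ α| ≤ 1/2) := by
  refine ⟨1/22, by norm_num, fun ε hε hε' α hα0 hα1 => ?_⟩
  set I : Set ℝ := Icc (-1:ℝ) 1 with hI
  let ext : C(I, ℝ) → ℝ → ℝ := fun u x => u (projIcc (-1) 1 (by norm_num) x)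
  have ext_cont : ∀ u : C(I,ℝ), Continuous (ext u) := fun u =>
    u.continuous.comp continuous_projIcc
  have ext_bound : ∀ u : C(I,ℝ), ‖u‖ ≤ 2 → ∀ x : ℝ, |ext u x| ≤ 2 := by
    intro u hu x
    rw [← Real.norm_eq_abs]
    exact (u.norm_coe_le_norm _).trans hu
  have cont_T : ∀ u : C(I,ℝ), ‖u‖ ≤ 2 →
      Continuous fun x : I => ∫ s in (0:ℝ)..(x:ℝ), Fi ε α (ext u) s := by
    intro u hu
    have hii : IntervalIntegrable (Fi ε α (ext u)) volume (-1) 1 := by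
      apply MeasureTheory.IntegrableOn.intervalIntegrable
      rw [uIcc_of_le (by norm_num : (-1:ℝ) ≤ 1)]
      exact Fi_intOn hε hε' hα0 hα1 (ext_bound u hu) (ext_cont u)
    have h := intervalIntegral.continuousOn_primitive_interval' hii
      (by rw [uIcc_of_le (by norm_num : (-1:ℝ) ≤ 1)]; norm_num : (0:ℝ) ∈ uIcc (-1:ℝ) 1)
    rw [uIcc_of_le (by norm_num : (-1:ℝ) ≤ 1)] at h
    exact h.restrict
  let S := Metric.closedBall (0 : C(I,ℝ)) 2
  haveI : CompleteSpace S := Metric.isClosed_closedBall.isComplete.completeSpace_coe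
  haveI : Nonempty S := ⟨⟨0, Metric.mem_closedBall_self (by norm_num)⟩⟩
  have memS_iff : ∀ u : C(I,ℝ), u ∈ S ↔ ‖u‖ ≤ 2 := fun u => mem_closedBall_zero_iff
  let T : S → S := fun u =>
    ⟨⟨fun x : I => ∫ s in (0:ℝ)..(x:ℝ), Fi ε α (ext ↑u) s,
        cont_T ↑u ((memS_iff ↑u).mp u.2)⟩, by
      rw [memS_iff]
      rw [ContinuousMap.norm_le _ (by norm_num : (0:ℝ) ≤ 2)]
      intro x
      rw [Real.norm_eq_abs]
      have hb := Fi_primitive_bound hε hε' hα0 hα1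
        (ext_bound ↑u ((memS_iff ↑u).mp u.2)) (ext_cont ↑u) x.2
      simpa using hb.trans (by norm_num)⟩
  have Tapp : ∀ (u : S) (x : I),
      (↑(T u) : C(I,ℝ)) x = ∫ s in (0:ℝ)..(x:ℝ), Fi ε α (ext ↑u) s :=
    fun u x => rfl
  have hcontr : ContractingWith (1/2 : NNReal) T := by
    constructor
    · rw [← NNReal.coe_lt_coe]; norm_num
    · apply LipschitzWith.of_dist_le_mul
      intro u v
      have hd0 : (0:ℝ) ≤ dist (↑u : C(I,ℝ)) ↑v := dist_nonneg
      rw [Subtype.dist_eq, Subtype.dist_eq]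
      have hcoe : ((1/2 : NNReal) : ℝ) = 1/2 := by norm_num
      rw [hcoe, ContinuousMap.dist_le (by positivity)]
      intro x
      rw [Tapp, Tapp, Real.dist_eq]
      have hiu : IntervalIntegrable (Fi ε α (ext ↑u)) volume 0 ↑x :=
        Fi_ii hε hε' hα0 hα1 (ext_bound ↑u ((memS_iff ↑u).mp u.2)) (ext_cont ↑u) x.2
      have hiv : IntervalIntegrable (Fi ε α (ext ↑v)) volume 0 ↑x :=
        Fi_ii hε hε' hα0 hα1 (ext_bound ↑v ((memS_iff ↑v).mp v.2)) (ext_cont ↑v) x.2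
      rw [← intervalIntegral.integral_sub hiu hiv]
      have hb : ∀ s ∈ Ι (0:ℝ) (↑x:ℝ),
          ‖Fi ε α (ext ↑u) s - Fi ε α (ext ↑v) s‖
            ≤ (1/4) * dist (↑u : C(I,ℝ)) ↑v := by
        intro s _
        have he : Fi ε α (ext ↑u) s - Fi ε α (ext ↑v) s
            = (ext ↑u s - ext ↑v s) * (ext ↑u s + ext ↑v s) / 16 := by
          simp only [Fi]; ring
        rw [he, Real.norm_eq_abs, abs_div, abs_mul]
        have h1 : |ext ↑u s - ext ↑v s| ≤ dist (↑u : C(I,ℝ)) ↑v := by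
          rw [← Real.dist_eq]
          exact ContinuousMap.dist_apply_le_dist _
        have h2 : |ext ↑u s + ext ↑v s| ≤ 4 := by
          have hbu := ext_bound ↑u ((memS_iff ↑u).mp u.2) s
          have hbv := ext_bound ↑v ((memS_iff ↑v).mp v.2) s
          calc |ext ↑u s + ext ↑v s| ≤ |ext ↑u s| + |ext ↑v s| := abs_add_le _ _
            _ ≤ 4 := by linarith
        have h3 : |(16:ℝ)| = 16 := by norm_num
        rw [h3]
        have h4 : |ext ↑u s - ext ↑v s| * |ext ↑u s + ext ↑v s|
            ≤ dist (↑u : C(I,ℝ)) ↑v * 4 := by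
          have := abs_nonneg (ext ↑u s - ext ↑v s)
          have := abs_nonneg (ext ↑u s + ext ↑v s)
          nlinarith
        linarith
      have hnorm := intervalIntegral.norm_integral_le_of_norm_le_const hb
      have hx1 : |(↑x:ℝ) - 0| ≤ 1 := by
        have hx2 : (↑x:ℝ) ∈ Icc (-1:ℝ) 1 := x.2
        rw [sub_zero, abs_le]
        exact ⟨hx2.1, hx2.2⟩
      rw [Real.norm_eq_abs] at hnorm
      calc |∫ s in (0:ℝ)..(↑x:ℝ), (Fi ε α (ext ↑u) s - Fi ε α (ext ↑v) s)|
          ≤ (1/4) * dist (↑u : C(I,ℝ)) ↑v * |(↑x:ℝ) - 0| := hnorm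
        _ ≤ 1/2 * dist (↑u : C(I,ℝ)) ↑v := by nlinarith
  obtain ⟨u, hu⟩ : ∃ u : S, T u = u := ⟨hcontr.fixedPoint T, hcontr.fixedPoint_isFixedPt⟩
  refine ⟨ext ↑u, (ext_cont ↑u).continuousOn, ?_,
    fun x _ => ext_bound ↑u ((memS_iff ↑u).mp u.2) x,
    fun x hx => chi1_bound hε hε' hα0 hα1 x hx⟩
  intro x hx
  have h1 : ext ↑u x = (↑u : C(I,ℝ)) ⟨x, hx⟩ := by
    simp only [ext]
    congr 1
    exact projIcc_of_mem (by norm_num) hx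
  have h2 : (↑u : C(I,ℝ)) ⟨x, hx⟩ = ∫ s in (0:ℝ)..x, Fi ε α (ext ↑u) s := by
    conv_lhs => rw [show (↑u : C(I,ℝ)) = ↑(T u) from (congrArg Subtype.val hu).symm]
    exact Tapp u ⟨x, hx⟩
  rw [h1, h2]
  rfl
end

section
/- Let ε ∈ (0, 1], α ∈ (1/4, 1/2), and let χ̃₂ : (0, 1] → ℝ be differentiable with |χ̃₂| ≤ 2 and satisfying χ̃₂′(x) = 2χ₁′(x)²(1 + χ₁(x))⁻² + χ̃₂(x)²/16 for all x ∈ (0, 1). Then the doubly-weighted integral of the second derivative converges: ∫₀^1 x² · χ̃₂″(x)² dx < ∞. -/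
open MeasureTheory Set



lemma aux_log_ge (x : ℝ) (hx0 : 0 < x) (hx1 : x ≤ 1) : 1 ≤ Real.log (4 / |x|) := by
  rw [abs_of_pos hx0]
  have h4 : (4:ℝ) ≤ 4 / x := by
    rw [le_div_iff₀ hx0]; nlinarith
  have hlog : Real.log 4 ≤ Real.log (4 / x) := Real.log_le_log (by norm_num) h4
  have h42 : Real.log 4 = 2 * Real.log 2 := by
    rw [show (4:ℝ) = 2^2 by norm_num, Real.log_pow]; push_cast; ring
  nlinarith [Real.log_two_gt_d9]

lemma aux_log_rpow_le (x β : ℝ) (hx0 : 0 < x) (hx1 : x ≤ 1) (hβ0 : 0 ≤ β) (hβ : β ≤ 3/2) :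
    Real.log (4 / |x|) ^ β ≤ 18 * x ^ (-(1/2) : ℝ) := by
  rw [abs_of_pos hx0]
  set t : ℝ := 4 / x with ht
  have ht4 : (4:ℝ) ≤ t := by rw [ht, le_div_iff₀ hx0]; nlinarith
  have ht0 : 0 < t := by linarith
  -- log t ≤ 3 * t ^ (1/3)
  have h1 : Real.log t ≤ 3 * t ^ ((1:ℝ)/3) := by
    have := Real.log_le_sub_one_of_pos (Real.rpow_pos_of_pos ht0 ((1:ℝ)/3))
    have h2 : Real.log (t ^ ((1:ℝ)/3)) = (1/3) * Real.log t := Real.log_rpow ht0 _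
    nlinarith [Real.rpow_pos_of_pos ht0 ((1:ℝ)/3)]
  have hlog0 : 0 ≤ Real.log t := Real.log_nonneg (by linarith)
  have h2 : Real.log t ^ β ≤ (3 * t ^ ((1:ℝ)/3)) ^ β :=
    Real.rpow_le_rpow hlog0 h1 hβ0
  have h3 : (3 * t ^ ((1:ℝ)/3)) ^ β = 3 ^ β * t ^ (β/3) := by
    rw [Real.mul_rpow (by norm_num) (Real.rpow_nonneg ht0.le _),
      ← Real.rpow_mul ht0.le]
    ring_nf
  have h4 : 3 ^ β ≤ (9:ℝ) := by
    calc (3:ℝ) ^ β ≤ 3 ^ (2:ℝ) := Real.rpow_le_rpow_of_exponent_le (by norm_num) (by linarith)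
    _ = 9 := by rw [show (2:ℝ) = ((2:ℕ):ℝ) by norm_num, Real.rpow_natCast]; norm_num
  have h5 : t ^ (β/3) ≤ t ^ ((1:ℝ)/2) :=
    Real.rpow_le_rpow_of_exponent_le (by linarith) (by linarith)
  have h6 : t ^ ((1:ℝ)/2) = 2 * x ^ (-(1/2):ℝ) := by
    rw [ht, Real.div_rpow (by norm_num) hx0.le, Real.rpow_neg hx0.le,
      show (4:ℝ) = 2^(2:ℕ) by norm_num, ← Real.rpow_natCast (2:ℝ) 2,
      ← Real.rpow_mul (by norm_num)]
    norm_num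
    rw [div_eq_mul_inv]
  have htb : 0 ≤ t ^ (β/3) := Real.rpow_nonneg ht0.le _
  have hxb : 0 ≤ x ^ (-(1/2):ℝ) := Real.rpow_nonneg hx0.le _
  calc Real.log t ^ β ≤ 3 ^ β * t ^ (β/3) := by rw [← h3]; exact h2
    _ ≤ 9 * (2 * x ^ (-(1/2):ℝ)) := by nlinarith [Real.rpow_nonneg (show (0:ℝ) ≤ 3 by norm_num) β]
    _ = 18 * x ^ (-(1/2):ℝ) := by ring

lemma aux_meas (α : ℝ) : Measurable fun s : ℝ => Real.log (4 / |s|) ^ α := by measurability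

lemma aux_integrable (α : ℝ) (hα0 : 0 < α) (hα : α ≤ 3/2) (x : ℝ) (hx : 0 < x) (hx1 : x ≤ 1) :
    IntervalIntegrable (fun s => Real.log (4 / |s|) ^ α) volume 0 x := by
  rw [intervalIntegrable_iff_integrableOn_Ioc_of_le hx.le]
  have hg : IntegrableOn (fun s : ℝ => 18 * s ^ (-(1/2):ℝ)) (Ioc 0 x) volume := by
    have := (intervalIntegral.intervalIntegrable_rpow' (a := 0) (b := x)
      (show (-1:ℝ) < -(1/2) by norm_num)).const_mul 18
    rwa [intervalIntegrable_iff_integrableOn_Ioc_of_le hx.le] at this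
  apply hg.mono' ((aux_meas α).aestronglyMeasurable.restrict)
  rw [ae_restrict_iff' measurableSet_Ioc]
  filter_upwards with s hs
  have hs0 : 0 < s := hs.1
  have hs1 : s ≤ 1 := le_trans hs.2 hx1
  have h1 : (1:ℝ) ≤ Real.log (4 / |s|) := aux_log_ge s hs0 hs1
  rw [Real.norm_eq_abs, abs_of_nonneg (Real.rpow_nonneg (by linarith) α)]
  exact aux_log_rpow_le s α hs0 hs1 hα0.le hα


noncomputable def Lf (y : ℝ) : ℝ := Real.log (4 / |y|)
noncomputable def gg (α y : ℝ) : ℝ := ∫ s in (0:ℝ)..y, Lf s ^ α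
noncomputable def ff (ε α : ℝ) (χt₂ : ℝ → ℝ) (y : ℝ) : ℝ :=
  2 * (ε * Lf y ^ α) ^ 2 * ((1 + ε * gg α y) ^ 2)⁻¹ + (χt₂ y) ^ 2 / 16

set_option maxHeartbeats 1000000 in
lemma key_bound (ε α : ℝ) (hε0 : 0 < ε) (hε1 : ε ≤ 1) (hα1 : 1/4 < α) (hα2 : α < 1/2)
    (χt₂ : ℝ → ℝ) (hbd : ∀ x ∈ Ioc (0:ℝ) 1, |χt₂ x| ≤ 2)
    (hODE : ∀ x ∈ Ioo (0:ℝ) 1, HasDerivAt χt₂ (ff ε α χt₂ x) x)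
    (x : ℝ) (hx : x ∈ Ioo (0:ℝ) 1) : |x * deriv (deriv χt₂) x| ≤ 100 := by
  obtain ⟨hx0, hx1⟩ := hx
  have hα0 : 0 < α := by linarith
  have hℓ1 : 1 ≤ Lf x := aux_log_ge x hx0 hx1.le
  have hℓ0 : 0 < Lf x := by linarith
  -- derivative of Lf at x
  have hL : HasDerivAt Lf (-x⁻¹) x := by
    have h1 : HasDerivAt (fun y : ℝ => Real.log 4 - Real.log y) (-x⁻¹) x :=
      (Real.hasDerivAt_log hx0.ne').const_sub _
    apply h1.congr_of_eventuallyEq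
    filter_upwards [eventually_gt_nhds hx0] with y hy
    rw [Lf, abs_of_pos hy, Real.log_div (by norm_num) hy.ne']
  have hLα : HasDerivAt (fun y => Lf y ^ α) (-x⁻¹ * α * Lf x ^ (α - 1)) x :=
    hL.rpow_const (Or.inl hℓ0.ne')
  -- derivative of gg
  have hgd : HasDerivAt (gg α) (Lf x ^ α) x := by
    have hint : IntervalIntegrable (fun s => Lf s ^ α) volume 0 x :=
      aux_integrable α hα0 (by linarith) x hx0 hx1.le
    have hmeas : StronglyMeasurableAtFilter (fun s => Lf s ^ α) (nhds x) :=
      ((aux_meas α).stronglyMeasurable).stronglyMeasurableAtFilter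
    have hcont : ContinuousAt (fun s => Lf s ^ α) x := by
      have h1 : ContinuousAt Lf x := by
        apply ContinuousAt.log
        · exact continuousAt_const.div continuous_abs.continuousAt (by positivity)
        · positivity
      exact h1.rpow_const (Or.inr hα0.le)
    exact intervalIntegral.integral_hasDerivAt_right hint hmeas hcont
  have hG0 : 0 ≤ gg α x := by
    apply intervalIntegral.integral_nonneg hx0.le
    intro s hs
    rcases eq_or_lt_of_le hs.1 with h | h
    · simp [Lf, ← h, Real.zero_rpow hα0.ne']
    · have h2 := aux_log_ge s h (le_trans hs.2 hx1.le)
      exact Real.rpow_nonneg (le_trans zero_le_one h2) _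
  have ht1 : (1:ℝ) ≤ 1 + ε * gg α x := by nlinarith
  have hdenne : ((1 + ε * gg α x) ^ 2 : ℝ) ≠ 0 := by positivity
  have hden := ((hgd.const_mul ε).const_add 1).pow 2
  have hinv := hden.inv hdenne
  have hnum := ((hLα.const_mul ε).pow 2).const_mul 2
  have hP := hnum.mul hinv
  have hQ := ((hODE x ⟨hx0, hx1⟩).pow 2).div_const 16
  set ℓ := Lf x with hldef
  set G := gg α x with hGdef
  set c := χt₂ x with hcdef
  have hE : HasDerivAt (ff ε α χt₂)
      (-(4*ε^2*α) * (ℓ^α * ℓ^(α-1)) * x⁻¹ * ((1+ε*G)^2)⁻¹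
        + (-(4*ε^3) * (x*(ℓ^α)^3) * ((1+ε*G) * (((1+ε*G)^2)^2)⁻¹)) * x⁻¹
        + c * (ff ε α χt₂ x) / 8) x := by
    convert hP.add hQ using 1
    · rfl
    · rfl
    · rfl
    simp only [Pi.pow_apply, Pi.inv_apply, ← hldef, ← hGdef]
    field_simp
    ring
  -- identify the second derivative
  have heq : deriv χt₂ =ᶠ[nhds x] ff ε α χt₂ := by
    filter_upwards [isOpen_Ioo.mem_nhds (⟨hx0, hx1⟩ : x ∈ Ioo (0:ℝ) 1)] with y hy
    exact (hODE y hy).deriv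
  have hdd : deriv (deriv χt₂) x =
      -(4*ε^2*α) * (ℓ^α * ℓ^(α-1)) * x⁻¹ * ((1+ε*G)^2)⁻¹
        + (-(4*ε^3) * (x*(ℓ^α)^3) * ((1+ε*G) * (((1+ε*G)^2)^2)⁻¹)) * x⁻¹
        + c * (ff ε α χt₂ x) / 8 := by
    rw [heq.deriv_eq]; exact hE.deriv
  rw [hdd]
  have hffeq : ff ε α χt₂ x = 2 * (ε * ℓ^α)^2 * ((1+ε*G)^2)⁻¹ + c^2/16 := rfl
  -- bounds
  have hxx : x * x⁻¹ = 1 := mul_inv_cancel₀ hx0.ne'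
  have hr : ℓ^α * ℓ^(α-1) = ℓ^(2*α-1) := by
    rw [← Real.rpow_add hℓ0]; congr 1; ring
  have hr1 : ℓ^(2*α-1) ≤ 1 :=
    Real.rpow_le_one_of_one_le_of_nonpos hℓ1 (by linarith)
  have hr0 : (0:ℝ) ≤ ℓ^(2*α-1) := Real.rpow_nonneg (by linarith) _
  have hhalf : x * x ^ (-(1/2):ℝ) ≤ 1 := by
    have h1 : x * x ^ (-(1/2):ℝ) = x ^ ((1:ℝ) + -(1/2)) := by
      rw [Real.rpow_add hx0, Real.rpow_one]
    rw [h1]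
    exact Real.rpow_le_one hx0.le hx1.le (by norm_num)
  have hx3 : x * (ℓ^α)^3 ≤ 18 := by
    have h1 : (ℓ^α)^(3:ℕ) = ℓ^(α*3) := by
      rw [← Real.rpow_natCast (ℓ^α) 3, ← Real.rpow_mul (le_of_lt hℓ0)]
      norm_num
    have h2 : ℓ^(α*3) ≤ 18 * x ^ (-(1/2):ℝ) :=
      aux_log_rpow_le x (α*3) hx0 hx1.le (by linarith) (by linarith)
    have h3 : (0:ℝ) ≤ x ^ (-(1/2):ℝ) := Real.rpow_nonneg hx0.le _
    calc x * (ℓ^α)^3 = x * ℓ^(α*3) := by rw [h1]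
      _ ≤ x * (18 * x ^ (-(1/2):ℝ)) := mul_le_mul_of_nonneg_left h2 hx0.le
      _ = 18 * (x * x ^ (-(1/2):ℝ)) := by ring
      _ ≤ 18 := by linarith
  have hx2 : x * (ℓ^α)^2 ≤ 18 := by
    have h1 : (ℓ^α)^(2:ℕ) = ℓ^(α*2) := by
      rw [← Real.rpow_natCast (ℓ^α) 2, ← Real.rpow_mul (le_of_lt hℓ0)]
      norm_num
    have h2 : ℓ^(α*2) ≤ 18 * x ^ (-(1/2):ℝ) :=
      aux_log_rpow_le x (α*2) hx0 hx1.le (by linarith) (by linarith)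
    have h3 : (0:ℝ) ≤ x ^ (-(1/2):ℝ) := Real.rpow_nonneg hx0.le _
    calc x * (ℓ^α)^2 = x * ℓ^(α*2) := by rw [h1]
      _ ≤ x * (18 * x ^ (-(1/2):ℝ)) := by nlinarith
      _ = 18 * (x * x ^ (-(1/2):ℝ)) := by ring
      _ ≤ 18 := by nlinarith
  have hc2 : |c| ≤ 2 := hbd x ⟨hx0, hx1.le⟩
  have hc2' : -2 ≤ c ∧ c ≤ 2 := abs_le.mp hc2
  clear_value ℓ G c
  have hp0 : (0:ℝ) ≤ ℓ^α := Real.rpow_nonneg (by linarith) _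
  have hI0 : (0:ℝ) ≤ ((1+ε*G)^2)⁻¹ := by positivity
  have hI1 : ((1+ε*G)^2)⁻¹ ≤ 1 := by
    have h : (1:ℝ) ≤ (1+ε*G)^2 := by nlinarith
    exact inv_le_one_of_one_le₀ h
  have hw0 : (0:ℝ) ≤ (1+ε*G) * (((1+ε*G)^2)^2)⁻¹ := by positivity
  have hw1 : (1+ε*G) * (((1+ε*G)^2)^2)⁻¹ ≤ 1 := by
    rw [mul_inv_le_iff₀ (by positivity), one_mul]
    have h3 : (1:ℝ) ≤ (1+ε*G)^3 := one_le_pow₀ ht1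
    nlinarith [mul_le_mul_of_nonneg_left h3 (by linarith : (0:ℝ) ≤ 1+ε*G)]
  have hff0 : 0 ≤ ff ε α χt₂ x := by
    rw [hffeq]
    positivity
  have hε2 : ε^2 ≤ 1 := pow_le_one₀ hε0.le hε1
  have hcc : c^2 ≤ 4 := by
    nlinarith [mul_nonneg (by linarith [hc2'.2] : (0:ℝ) ≤ 2 - c)
      (by linarith [hc2'.1] : (0:ℝ) ≤ 2 + c)]
  have hfb : x * ff ε α χt₂ x ≤ 37 := by
    rw [hffeq]
    have hx2' : 0 ≤ x * (ℓ^α)^2 := by positivity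
    have h1 : x * (2 * (ε * ℓ^α)^2 * ((1+ε*G)^2)⁻¹) ≤ 36 := by
      calc x * (2 * (ε * ℓ^α)^2 * ((1+ε*G)^2)⁻¹)
          = (2 * ε^2 * (x * (ℓ^α)^2)) * ((1+ε*G)^2)⁻¹ := by ring
        _ ≤ 2 * ε^2 * (x * (ℓ^α)^2) := mul_le_of_le_one_right (by positivity) hI1
        _ ≤ 2 * (x * (ℓ^α)^2) := by
            have h := mul_le_mul_of_nonneg_right hε2 hx2'
            linarith
        _ ≤ 36 := by linarith
    have h2 : x * (c^2/16) ≤ 1 := by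
      have h := mul_nonneg (by linarith : (0:ℝ) ≤ 1 - x) (sq_nonneg c)
      linarith
    linarith
  -- final assembly
  have hxp30 : 0 ≤ x * (ℓ^α)^3 := mul_nonneg hx0.le (pow_nonneg hp0 3)
  have hε30 : (0:ℝ) ≤ ε^3 := pow_nonneg hε0.le 3
  have hε3 : ε^3 ≤ 1 := pow_le_one₀ hε0.le hε1
  have hxff0 : 0 ≤ x * ff ε α χt₂ x := mul_nonneg hx0.le hff0
  have hval : x * (-(4*ε^2*α) * (ℓ^α * ℓ^(α-1)) * x⁻¹ * ((1+ε*G)^2)⁻¹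
        + (-(4*ε^3) * (x*(ℓ^α)^3) * ((1+ε*G) * (((1+ε*G)^2)^2)⁻¹)) * x⁻¹
        + c * (ff ε α χt₂ x) / 8)
      = -(4*ε^2*α) * ℓ^(2*α-1) * ((1+ε*G)^2)⁻¹
        + -(4*ε^3) * (x*(ℓ^α)^3) * ((1+ε*G) * (((1+ε*G)^2)^2)⁻¹)
        + c * (x * ff ε α χt₂ x) / 8 := by
    rw [← hr]
    field_simp
  rw [hval, abs_le]
  clear hval hffeq hODE hbd
  have ha0 : (0:ℝ) ≤ 4*ε^2*α := mul_nonneg (by positivity) hα0.le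
  have hA2 : 4*ε^2*α * ℓ^(2*α-1) * ((1+ε*G)^2)⁻¹ ≤ 2 := by
    calc 4*ε^2*α * ℓ^(2*α-1) * ((1+ε*G)^2)⁻¹ ≤ 4*ε^2*α * ℓ^(2*α-1) :=
          mul_le_of_le_one_right (mul_nonneg ha0 hr0) hI1
      _ ≤ 4*ε^2*α := mul_le_of_le_one_right ha0 hr1
      _ ≤ 2 := by
          have h := mul_le_mul hε2 hα2.le hα0.le zero_le_one
          linarith
  have hA0 : 0 ≤ 4*ε^2*α * ℓ^(2*α-1) * ((1+ε*G)^2)⁻¹ :=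
    mul_nonneg (mul_nonneg ha0 hr0) hI0
  have hB2 : 4*ε^3 * (x*(ℓ^α)^3) * ((1+ε*G) * (((1+ε*G)^2)^2)⁻¹) ≤ 72 := by
    calc 4*ε^3 * (x*(ℓ^α)^3) * ((1+ε*G) * (((1+ε*G)^2)^2)⁻¹)
        ≤ 4*ε^3 * (x*(ℓ^α)^3) := mul_le_of_le_one_right
          (mul_nonneg (mul_nonneg (by norm_num) hε30) hxp30) hw1
      _ ≤ 4 * (x*(ℓ^α)^3) := by
          have h := mul_le_mul_of_nonneg_right hε3 hxp30
          linarith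
      _ ≤ 72 := by linarith
  have hB0 : 0 ≤ 4*ε^3 * (x*(ℓ^α)^3) * ((1+ε*G) * (((1+ε*G)^2)^2)⁻¹) :=
    mul_nonneg (mul_nonneg (mul_nonneg (by norm_num) hε30) hxp30) hw0
  have hC1 : c * (x * ff ε α χt₂ x) ≤ 74 := by
    have h := mul_le_mul_of_nonneg_right hc2'.2 hxff0
    linarith
  have hC2 : -74 ≤ c * (x * ff ε α χt₂ x) := by
    have h := mul_le_mul_of_nonneg_right hc2'.1 hxff0
    linarith
  constructor <;> linarith

/-- for `ε ∈ (0,1]`, `α ∈ (1/4,1/2)` and `χ̃₂ : (0,1] → ℝ` differentiable,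
bounded by `2`, solving `χ̃₂′ = 2χ₁′²(1+χ₁)⁻² + χ̃₂²/16` on `(0,1)` (with
`χ₁(x) = ε∫₀ˣ(log(4/|s|))^α ds`), the doubly-weighted integral of the second derivative
converges: `∫₀¹ x²·χ̃₂″(x)² dx < ∞`. -/
theorem chi2_tilde_second_derivative_weighted_integrable (ε α : ℝ)
    (hε0 : 0 < ε) (hε1 : ε ≤ 1) (hα1 : 1/4 < α) (hα2 : α < 1/2)
    (χt₂ : ℝ → ℝ)
    (hbd : ∀ x ∈ Ioc (0:ℝ) 1, |χt₂ x| ≤ 2)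
    (hODE : ∀ x ∈ Ioo (0:ℝ) 1,
      HasDerivAt χt₂
        (2 * (ε * (Real.log (4 / |x|)) ^ α) ^ 2
            * ((1 + ε * ∫ s in (0:ℝ)..x, (Real.log (4 / |s|)) ^ α) ^ 2)⁻¹
          + (χt₂ x) ^ 2 / 16) x) :
    IntegrableOn (fun x => x ^ 2 * (deriv (deriv χt₂) x) ^ 2) (Ioo (0:ℝ) 1) volume := by
  have hODE' : ∀ x ∈ Ioo (0:ℝ) 1, HasDerivAt χt₂ (ff ε α χt₂ x) x := hODE
  apply Measure.integrableOn_of_bounded (M := 10000) measure_Ioo_lt_top.ne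
  · exact ((measurable_id.pow_const 2).mul
      ((measurable_deriv (deriv χt₂)).pow_const 2)).aestronglyMeasurable
  · rw [ae_restrict_iff' measurableSet_Ioo]
    filter_upwards with y hy
    have h := key_bound ε α hε0 hε1 hα1 hα2 χt₂ hbd hODE' y hy
    rw [Real.norm_eq_abs, abs_of_nonneg (by positivity)]
    calc y^2 * (deriv (deriv χt₂) y)^2 = |y * deriv (deriv χt₂) y|^2 := by
          rw [sq_abs]; ring
      _ ≤ 100^2 := pow_le_pow_left₀ (abs_nonneg _) h 2
      _ ≤ 10000 := by norm_num
end

section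
/- Let χ₁, χ̃₂ : ℝ → ℝ satisfy |χ₁(r)| ≤ 1/100 and |χ̃₂(r)| ≤ 1/100 for all r. Let u, v, x₂, x₃ ∈ ℝ satisfy: 0 ≤ v ≤ 1, |u| ≤ 1 − v, u + v ≤ 1, x₂² + x₃² ≤ 4, and the surface relation 16(1 − v)u = −(x₂² + x₃²). With p = 1 + χ₁(−2u) and s = χ̃₂(−2u), define E = 16(1 − v)u + (¼(u + v) + (x₂²p + x₃²p⁻¹)s/64)·s·16u² − (x₂² + x₃²)(1 − v)s + p⁻¹x₂²/4 + p·x₃²/4. Then E ≤ 0, with equality if and only if u = 0. (E equals g^{αβ}n_α n_β for the conormal n of the boundary surface C₁, so C₁ is non-timelike, i.e. null or spacelike.) -/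
set_option maxHeartbeats 2000000 in
/-- on the boundary surface `C₁` (given in null coordinates by
`16(1-v)u = -(x₂² + x₃²)`), the quantity `E = g^{αβ}n_α n_β` for the conormal `n`
satisfies `E ≤ 0`, with equality iff `u = 0`; hence `C₁` is non-timelike. -/
theorem boundary_non_timelike (χ₁ χt₂ : ℝ → ℝ)
    (h₁ : ∀ r : ℝ, |χ₁ r| ≤ 1/100) (h₂ : ∀ r : ℝ, |χt₂ r| ≤ 1/100)
    (u v x₂ x₃ p s E : ℝ)
    (hv0 : 0 ≤ v) (hv1 : v ≤ 1) (hu : |u| ≤ 1 - v) (huv : u + v ≤ 1)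
    (hx : x₂ ^ 2 + x₃ ^ 2 ≤ 4)
    (hsurf : 16 * (1 - v) * u = -(x₂ ^ 2 + x₃ ^ 2))
    (hp : p = 1 + χ₁ (-2 * u)) (hs : s = χt₂ (-2 * u))
    (hE : E = 16 * (1 - v) * u
        + ((1/4) * (u + v) + (x₂ ^ 2 * p + x₃ ^ 2 * p⁻¹) * s / 64) * s * 16 * u ^ 2
        - (x₂ ^ 2 + x₃ ^ 2) * (1 - v) * s
        + p⁻¹ * x₂ ^ 2 / 4 + p * x₃ ^ 2 / 4) :
    E ≤ 0 ∧ (E = 0 ↔ u = 0) := by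
  obtain ⟨hu1, hu2⟩ := abs_le.mp hu
  obtain ⟨hs1, hs2⟩ := abs_le.mp (h₂ (-2*u))
  obtain ⟨ha1, ha2⟩ := abs_le.mp (h₁ (-2*u))
  have hp1 : (99:ℝ)/100 ≤ p := by rw [hp]; linarith
  have hp2 : p ≤ 101/100 := by rw [hp]; linarith
  have hp0 : (0:ℝ) < p := by linarith
  have hs1' : -(1/100) ≤ s := by rw [hs]; linarith
  have hs2' : s ≤ 1/100 := by rw [hs]; linarith
  obtain ⟨q, hqdef⟩ : ∃ q : ℝ, q = p⁻¹ := ⟨_, rfl⟩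
  rw [← hqdef] at hE
  have hpq : p * q = 1 := by rw [hqdef]; exact mul_inv_cancel₀ (ne_of_gt hp0)
  have hq0 : (0:ℝ) < q := by rw [hqdef]; exact inv_pos.mpr hp0
  have hq2 : q ≤ 100/99 := by nlinarith only [hpq, hq0, hp1]
  have hq1 : (100:ℝ)/101 ≤ q := by nlinarith only [hpq, hq0, hp2]
  obtain ⟨C, hCdef⟩ : ∃ C : ℝ, C = (1/4) * (u + v) + (x₂ ^ 2 * p + x₃ ^ 2 * q) * s / 64 :=
    ⟨_, rfl⟩
  rw [← hCdef] at hE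
  obtain ⟨Q, hQdef⟩ : ∃ Q : ℝ, Q = x₂ ^ 2 + x₃ ^ 2 := ⟨_, rfl⟩
  rw [← hQdef] at hx hsurf hE
  have hQ0 : (0:ℝ) ≤ Q := by rw [hQdef]; positivity
  have hQ : Q = 16 * (1 - v) * (-u) := by linear_combination hsurf
  have hun : u ≤ 0 := by
    by_contra h
    push_neg at h
    nlinarith only [mul_pos (lt_of_lt_of_le h hu2) h, hQ, hQ0]
  have h16u2 : 16 * u ^ 2 ≤ Q := by
    nlinarith only [mul_nonneg (by linarith : (0:ℝ) ≤ 1 - v + u) (by linarith : (0:ℝ) ≤ -u), hQ]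
  have hD0 : (0:ℝ) ≤ x₂ ^ 2 * p + x₃ ^ 2 * q :=
    add_nonneg (mul_nonneg (sq_nonneg _) hp0.le) (mul_nonneg (sq_nonneg _) hq0.le)
  have hDu : x₂ ^ 2 * p + x₃ ^ 2 * q ≤ 102/25 := by
    nlinarith only [mul_nonneg (by linarith : (0:ℝ) ≤ 51/50 - p) (sq_nonneg x₂),
      mul_nonneg (by linarith : (0:ℝ) ≤ 51/50 - q) (sq_nonneg x₃), hx, hQdef]
  have huvl : (-1:ℝ) ≤ u + v := by linarith
  have hCub : C ≤ 26/100 := by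
    rw [hCdef]
    nlinarith only [mul_nonneg hD0 (by linarith : (0:ℝ) ≤ 1/100 - s), hDu, hD0, huv, huvl,
      hs1', hs2']
  have hClb : -(26/100) ≤ C := by
    rw [hCdef]
    nlinarith only [mul_nonneg hD0 (by linarith : (0:ℝ) ≤ 1/100 + s), hDu, hD0, huv, huvl,
      hs1', hs2']
  have hCs : C * s ≤ 26/10000 := by
    nlinarith only [mul_nonneg (by linarith : (0:ℝ) ≤ 26/100 - C) (by linarith : (0:ℝ) ≤ 1/100 + s),
      mul_nonneg (by linarith : (0:ℝ) ≤ 26/100 + C) (by linarith : (0:ℝ) ≤ 1/100 - s)]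
  have hM : C * s * 16 * u ^ 2 ≤ (26/10000) * (16 * u ^ 2) := by
    nlinarith only [mul_le_mul_of_nonneg_right hCs (sq_nonneg u)]
  have hT2 : -(Q * (1 - v) * s) ≤ Q/100 := by
    nlinarith only [mul_nonneg (mul_nonneg hQ0 (by linarith : (0:ℝ) ≤ 1 - v))
        (by linarith : (0:ℝ) ≤ 1/100 + s),
      mul_nonneg hQ0 hv0]
  have hT1 : q * x₂ ^ 2 / 4 + p * x₃ ^ 2 / 4 ≤ (26/99) * Q := by
    nlinarith only [mul_nonneg (by linarith : (0:ℝ) ≤ 104/99 - q) (sq_nonneg x₂),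
      mul_nonneg (by linarith : (0:ℝ) ≤ 104/99 - p) (sq_nonneg x₃), hQdef]
  have hEQ : E ≤ -(1/2) * Q := by
    rw [hE]
    nlinarith only [hM, hT2, hT1, h16u2, hsurf, hQ0]
  constructor
  · linarith
  constructor
  · intro hE0
    have hu2z : u ^ 2 = 0 := le_antisymm (by nlinarith only [hEQ, hE0, h16u2]) (sq_nonneg u)
    exact pow_eq_zero_iff (by norm_num) |>.mp hu2z
  · intro hu0
    have hQz : Q = 0 := by
      have h := hsurf
      rw [hu0] at h
      linarith
    have hx23 : x₂ ^ 2 + x₃ ^ 2 = 0 := by rw [hQdef] at hQz; exact hQz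
    have hx2z : x₂ ^ 2 = 0 := by nlinarith only [hx23, sq_nonneg x₂, sq_nonneg x₃]
    have hx3z : x₃ ^ 2 = 0 := by nlinarith only [hx23, sq_nonneg x₂, sq_nonneg x₃]
    rw [hE, hu0, hQz, hx2z, hx3z]
    ring
end
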